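/- arXiv:2204.07750 — 7 statements merged into one kernel-verified Lean document; each statement's English description precedes it below -/
import Mathlib

section
/- Let p be a prime and Q a finite nonabelian p-group such that Z(Q) = [Q,Q] and this common subgroup is elementary abelian. Assume |Z(Q)| = p² and |Q/Z(Q)| = p³ (so |Q| = p⁵). Then Q has exactly one abelian subgroup of order p⁴, i.e., exactly one abelian subgroup of index p. -/
/-!
Commutators are central, so `⁅·, ·⁆` is multiplicative in each argument. Since `Z(Q)` has index
`p³`, three elements `f₁ f₂ f₃` generate `Q` modulo `Z(Q)`. The `p³` products
`⁅f₁, f₂⁆ ^ i * ⁅f₁, f₃⁆ ^ j * ⁅f₂, f₃⁆ ^ k` with `0 ≤ i, j, k < p` cannot be distinct in `Z(Q)`,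
which has order `p²`. A nontrivial relation among them, normalised (commutators have order `p`)
to have one exponent equal to `1`, reads `⁅a * c ^ α, b * c ^ β⁆ = 1` for some ordering
`{a, b, c} = {f₁, f₂, f₃}`. The subgroup generated by `Z(Q)`, `a * c ^ α` and `b * c ^ β` is then
abelian and normal, and it has index `p`: together with `c` it generates `Q`, and
`c ^ p ∈ Z(Q)` because `⁅c ^ p, g⁆ = ⁅c, g⁆ ^ p = 1`.

Two distinct abelian subgroups `A`, `B` of index `p` generate `Q`, so `A ⊓ B` is central; but it
has order at least `p⁵ / p² = p³ > |Z(Q)|`.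
-/

open Subgroup
open scoped commutatorElement

section CentralCommutators

variable {G : Type*} [Group G]

theorem commutatorElement_mul_right_of_central (hc : ∀ a b : G, ⁅a, b⁆ ∈ center G)
    (a b c : G) : ⁅a, b * c⁆ = ⁅a, b⁆ * ⁅a, c⁆ := by
  rw [commutatorElement_mul_right_eq_mul_conj, mul_assoc _ b, mem_center_iff.mp (hc a c) b,
    ← mul_assoc, mul_inv_cancel_right]

theorem commutatorElement_zpow_right_of_central (hc : ∀ a b : G, ⁅a, b⁆ ∈ center G)
    (a b : G) (n : ℤ) : ⁅a, b ^ n⁆ = ⁅a, b⁆ ^ n :=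
  map_zpow (MonoidHom.mk' (fun b ↦ ⁅a, b⁆) (commutatorElement_mul_right_of_central hc a)) b n

theorem commutatorElement_zpow_left_of_central (hc : ∀ a b : G, ⁅a, b⁆ ∈ center G)
    (a b : G) (n : ℤ) : ⁅a ^ n, b⁆ = ⁅a, b⁆ ^ n := by
  rw [← commutatorElement_inv, commutatorElement_zpow_right_of_central hc, ← inv_zpow,
    commutatorElement_inv]

theorem commutatorElement_mul_left_of_central (hc : ∀ a b : G, ⁅a, b⁆ ∈ center G)
    (a b c : G) : ⁅a * b, c⁆ = ⁅a, c⁆ * ⁅b, c⁆ := by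
  rw [← commutatorElement_inv, commutatorElement_mul_right_of_central hc, mul_inv_rev,
    commutatorElement_inv, commutatorElement_inv, mem_center_iff.mp (hc a c) _]

theorem commutatorElement_mul_zpow_mul_zpow (hc : ∀ a b : G, ⁅a, b⁆ ∈ center G)
    (a b c : G) (α β : ℤ) :
    ⁅a * c ^ α, b * c ^ β⁆ = ⁅a, b⁆ * ⁅a, c⁆ ^ β * ⁅c, b⁆ ^ α := by
  simp only [commutatorElement_mul_left_of_central hc, commutatorElement_mul_right_of_central hc,
    commutatorElement_zpow_left_of_central hc, commutatorElement_zpow_right_of_central hc,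
    commutatorElement_self, one_zpow, mul_one, mul_assoc]

theorem pow_mem_center_of_commutatorElement_pow (hc : ∀ a b : G, ⁅a, b⁆ ∈ center G) {p : ℕ}
    (hp : ∀ a b : G, ⁅a, b⁆ ^ p = 1) (a : G) : a ^ p ∈ center G := by
  refine mem_center_iff.mpr fun b ↦ ?_
  have : ⁅a ^ (p : ℤ), b⁆ = 1 := by
    rw [commutatorElement_zpow_left_of_central hc, zpow_natCast, hp]
  rw [zpow_natCast, commutatorElement_eq_one_iff_mul_comm] at this
  exact this.symm

theorem commutatorElement_zpow_neg (a b : G) (n : ℤ) : ⁅a, b⁆ ^ (-n) = ⁅b, a⁆ ^ n := by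
  rw [zpow_neg, ← inv_zpow, commutatorElement_inv]

theorem sup_zpowers_mul_zpow_sup_zpowers_mul_zpow (N : Subgroup G) (a b c : G) (α β : ℤ) :
    N ⊔ zpowers (a * c ^ α) ⊔ zpowers (b * c ^ β) ⊔ zpowers c =
      N ⊔ zpowers a ⊔ zpowers b ⊔ zpowers c := by
  have mem : ∀ u v w : G, u ∈ N ⊔ zpowers u ⊔ zpowers v ⊔ zpowers w ∧
      v ∈ N ⊔ zpowers u ⊔ zpowers v ⊔ zpowers w ∧ w ∈ N ⊔ zpowers u ⊔ zpowers v ⊔ zpowers w :=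
    fun u v w ↦ ⟨mem_sup_left (mem_sup_left (mem_sup_right (mem_zpowers u))),
      mem_sup_left (mem_sup_right (mem_zpowers v)), mem_sup_right (mem_zpowers w)⟩
  obtain ⟨ha, hb, hc⟩ := mem a b c
  obtain ⟨ha', hb', hc'⟩ := mem (a * c ^ α) (b * c ^ β) c
  apply le_antisymm <;> refine sup_le (sup_le (sup_le (le_sup_left.trans
    (le_sup_left.trans le_sup_left)) ?_) ?_) (zpowers_le.mpr ‹_›) <;> rw [zpowers_le]
  · exact mul_mem ha (zpow_mem hc _)
  · exact mul_mem hb (zpow_mem hc _)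
  · simpa using mul_mem ha' (zpow_mem hc' (-α))
  · simpa using mul_mem hb' (zpow_mem hc' (-β))

theorem exists_commute_of_commutatorElement_relation (hc : ∀ a b : G, ⁅a, b⁆ ∈ center G)
    {N : Subgroup G} {a b c : G} (htop : N ⊔ zpowers a ⊔ zpowers b ⊔ zpowers c = ⊤) {α β : ℤ}
    (h : ⁅a, b⁆ * ⁅a, c⁆ ^ β * ⁅c, b⁆ ^ α = 1) :
    ∃ x y g : G, Commute x y ∧ N ⊔ zpowers x ⊔ zpowers y ⊔ zpowers g = ⊤ :=
  ⟨a * c ^ α, b * c ^ β, c, commutatorElement_eq_one_iff_commute.mp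
    (by rwa [commutatorElement_mul_zpow_mul_zpow hc]),
    by rwa [sup_zpowers_mul_zpow_sup_zpowers_mul_zpow]⟩

end CentralCommutators

section ThreeElements

variable {H : Type*} [CommGroup H] {p : ℕ}

theorem exists_zpow_mul_zpow_mul_zpow_eq_one [Finite H] (hH : Nat.card H < p ^ 3) (a b c : H) :
    ∃ i j k : ℤ, ¬ ((p : ℤ) ∣ i ∧ (p : ℤ) ∣ j ∧ (p : ℤ) ∣ k) ∧ a ^ i * b ^ j * c ^ k = 1 := by
  let f : Fin p × Fin p × Fin p → H := fun t ↦ a ^ (t.1 : ℕ) * b ^ (t.2.1 : ℕ) * c ^ (t.2.2 : ℕ)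
  have hf : ¬ Function.Injective f := fun hf ↦ by
    have hcard : Nat.card (Fin p × Fin p × Fin p) = p ^ 3 := by
      rw [Nat.card_prod, Nat.card_prod, Nat.card_fin]; ring
    exact (Nat.card_le_card_of_injective f hf).not_gt (hcard ▸ hH)
  obtain ⟨t, t', hftt', htt'⟩ : ∃ t t', f t = f t' ∧ t ≠ t' := by
    simpa [Function.Injective] using hf
  have hsep : ∀ m n : Fin p, (p : ℤ) ∣ (m : ℤ) - n → m = n := fun m n h ↦
    Fin.ext (Nat.ModEq.eq_of_lt_of_lt (Nat.modEq_iff_dvd.mpr h).symm m.2 n.2)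
  refine ⟨(t.1 : ℤ) - t'.1, (t.2.1 : ℤ) - t'.2.1, (t.2.2 : ℤ) - t'.2.2, fun ⟨hi, hj, hk⟩ ↦
    htt' (Prod.ext (hsep _ _ hi) (Prod.ext (hsep _ _ hj) (hsep _ _ hk))), ?_⟩
  rw [← div_eq_one.mpr hftt']
  simp only [f, zpow_sub, zpow_natCast, div_eq_mul_inv, mul_inv_rev]
  ac_rfl

theorem exists_mul_zpow_mul_zpow_eq_one (hp : p.Prime) {a b c : H} (ha : a ^ p = 1) {i j k : ℤ}
    (hi : ¬ (p : ℤ) ∣ i) (h : a ^ i * b ^ j * c ^ k = 1) : ∃ s t : ℤ, a * b ^ s * c ^ t = 1 := by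
  obtain ⟨u, v, huv⟩ : IsCoprime i p :=
    ((Nat.prime_iff_prime_int.mp hp).coprime_iff_not_dvd.mpr hi).symm
  have hau : (a ^ i) ^ u = a :=
    calc (a ^ i) ^ u = (a ^ i) ^ u * (a ^ (p : ℤ)) ^ v := by
          rw [zpow_natCast, ha, one_zpow, mul_one]
      _ = a := by
          rw [← zpow_mul, ← zpow_mul, ← zpow_add, mul_comm i, mul_comm (p : ℤ), huv, zpow_one]
  refine ⟨j * u, k * u, ?_⟩
  rw [← hau, zpow_mul, zpow_mul, ← mul_zpow, ← mul_zpow, h, one_zpow]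

theorem exists_mul_zpow_mul_zpow_eq_one_or_of_card_lt [Finite H] (hp : p.Prime)
    (hH : Nat.card H < p ^ 3) {a b c : H} (ha : a ^ p = 1) (hb : b ^ p = 1) (hc : c ^ p = 1) :
    ∃ s t : ℤ, a * b ^ s * c ^ t = 1 ∨ b * a ^ s * c ^ t = 1 ∨ c * a ^ s * b ^ t = 1 := by
  obtain ⟨i, j, k, hijk, h⟩ := exists_zpow_mul_zpow_mul_zpow_eq_one hH a b c
  by_cases hi : (p : ℤ) ∣ i
  · by_cases hj : (p : ℤ) ∣ j
    · have h' : c ^ k * a ^ i * b ^ j = 1 := by rw [← h]; ac_rfl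
      obtain ⟨s, t, h⟩ := exists_mul_zpow_mul_zpow_eq_one hp hc (fun hk ↦ hijk ⟨hi, hj, hk⟩) h'
      exact ⟨s, t, .inr (.inr h)⟩
    · have h' : b ^ j * a ^ i * c ^ k = 1 := by rw [← h]; ac_rfl
      obtain ⟨s, t, h⟩ := exists_mul_zpow_mul_zpow_eq_one hp hb hj h'
      exact ⟨s, t, .inr (.inl h)⟩
  · obtain ⟨s, t, h⟩ := exists_mul_zpow_mul_zpow_eq_one hp ha hi h
    exact ⟨s, t, .inl h⟩

end ThreeElements

section Subgroups

variable {G : Type*} [Group G]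

theorem exists_index_sup_zpowers_dvd {p n : ℕ} (hp : p.Prime) {H : Subgroup G}
    (hH : H.index ∣ p ^ (n + 1)) : ∃ g : G, (H ⊔ zpowers g).index ∣ p ^ n := by
  by_cases htop : H = ⊤
  · exact ⟨1, by simp [htop]⟩
  obtain ⟨g, hg⟩ : ∃ g, g ∉ H := by simpa [eq_top_iff'] using htop
  refine ⟨g, ?_⟩
  have hlt : H < H ⊔ zpowers g :=
    lt_of_le_of_ne le_sup_left fun h ↦ hg (h ▸ mem_sup_right (mem_zpowers g))
  have : H.FiniteIndex := ⟨fun h0 ↦ by simp [h0] at hH; exact hp.ne_zero hH⟩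
  have hK : (H ⊔ zpowers g).index ∣ H.index := index_dvd_of_le hlt.le
  obtain ⟨a, ha, hHa⟩ := (Nat.dvd_prime_pow hp).mp hH
  obtain ⟨b, hb, hKb⟩ := (Nat.dvd_prime_pow hp).mp (hK.trans hH)
  have : b < a := by
    have := index_strictAnti hlt
    rw [hHa, hKb] at this
    exact (Nat.pow_lt_pow_iff_right hp.one_lt).mp this
  exact hKb ▸ Nat.pow_dvd_pow p (by omega)

theorem exists_sup_zpowers_sup_zpowers_sup_zpowers_eq_top {p : ℕ} (hp : p.Prime) {H : Subgroup G}
    (hH : H.index ∣ p ^ 3) :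
    ∃ f₁ f₂ f₃ : G, H ⊔ zpowers f₁ ⊔ zpowers f₂ ⊔ zpowers f₃ = ⊤ := by
  obtain ⟨f₁, h₁⟩ := exists_index_sup_zpowers_dvd hp hH
  obtain ⟨f₂, h₂⟩ := exists_index_sup_zpowers_dvd hp h₁
  obtain ⟨f₃, h₃⟩ := exists_index_sup_zpowers_dvd hp h₂
  exact ⟨f₁, f₂, f₃, index_eq_one.mp (Nat.dvd_one.mp h₃)⟩

theorem index_dvd_of_sup_zpowers_eq_top {A : Subgroup G} [A.Normal] {g : G} {n : ℕ}
    (hg : g ^ n ∈ A) (htop : A ⊔ zpowers g = ⊤) : A.index ∣ n := by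
  have hcyc : zpowers (QuotientGroup.mk' A g) = ⊤ := by
    have := congrArg (map (QuotientGroup.mk' A)) htop
    rwa [Subgroup.map_sup, QuotientGroup.map_mk'_self, bot_sup_eq, MonoidHom.map_zpowers,
      ← MonoidHom.range_eq_map, QuotientGroup.range_mk'] at this
  rw [index_eq_card, ← card_top, ← hcyc, Nat.card_zpowers]
  exact orderOf_dvd_of_pow_eq_one ((QuotientGroup.eq_one_iff _).mpr hg)

theorem inf_le_center_of_sup_eq_top {A B : Subgroup G} (hA : A ≤ centralizer A)
    (hB : B ≤ centralizer B) (htop : A ⊔ B = ⊤) : A ⊓ B ≤ center G := by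
  have : centralizer (A ⊓ B : Set G) = ⊤ := by
    refine eq_top_iff.mpr (htop ▸ sup_le ?_ ?_)
    · exact hA.trans (centralizer_le inf_le_left)
    · exact hB.trans (centralizer_le inf_le_right)
  exact centralizer_eq_top_iff_subset.mp this

theorem eq_of_le_of_index_eq {H K : Subgroup G} (hle : H ≤ K) (hidx : H.index = K.index)
    (h0 : K.index ≠ 0) : H = K := by
  have := relIndex_mul_index hle
  rw [hidx, mul_eq_right₀ h0, relIndex_eq_one] at this
  exact le_antisymm hle this

theorem sup_eq_top_of_index_eq_prime {p : ℕ} (hp : p.Prime) {A B : Subgroup G}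
    (hA : A.index = p) (hB : B.index = p) (hne : A ≠ B) : A ⊔ B = ⊤ := by
  rcases (Nat.dvd_prime hp).mp (hA ▸ index_dvd_of_le le_sup_left : (A ⊔ B).index ∣ p) with h | h
  · exact index_eq_one.mp h
  · have h0 : (A ⊔ B).index ≠ 0 := h ▸ hp.ne_zero
    exact (hne ((eq_of_le_of_index_eq le_sup_left (hA.trans h.symm) h0).trans
      (eq_of_le_of_index_eq le_sup_right (hB.trans h.symm) h0).symm)).elim

theorem eq_of_le_centralizer_of_index_eq_prime [Finite G] {p : ℕ} (hp : p.Prime)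
    (hZ : Nat.card (center G) * p ^ 2 < Nat.card G) {A B : Subgroup G}
    (hAc : A ≤ centralizer A) (hBc : B ≤ centralizer B) (hA : A.index = p) (hB : B.index = p) :
    A = B := by
  by_contra hne
  have hcen := inf_le_center_of_sup_eq_top hAc hBc (sup_eq_top_of_index_eq_prime hp hA hB hne)
  have hidx : (A ⊓ B).index ≤ p ^ 2 := by simpa [hA, hB, sq] using index_inf_le (H := A) (K := B)
  have hcard := card_mul_index (A ⊓ B)
  have hle := card_le_of_le hcen
  nlinarith

theorem zpowers_le_centralizer_zpowers {a b : G} (h : Commute a b) :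
    zpowers a ≤ centralizer (zpowers b : Set G) := by
  rw [zpowers_le, zpowers_eq_closure, centralizer_closure, mem_centralizer_singleton_iff]
  exact h.eq

theorem center_sup_zpowers_sup_zpowers_le_centralizer {x y : G} (h : Commute x y) :
    center G ⊔ zpowers x ⊔ zpowers y ≤
      centralizer (↑(center G ⊔ zpowers x ⊔ zpowers y) : Set G) := by
  have hle : ∀ {z}, Commute x z → Commute y z →
      center G ⊔ zpowers x ⊔ zpowers y ≤ centralizer (zpowers z : Set G) := fun hx hy ↦
    sup_le (sup_le (center_le_centralizer _) (zpowers_le_centralizer_zpowers hx))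
      (zpowers_le_centralizer_zpowers hy)
  exact sup_le (sup_le (center_le_centralizer _)
    (le_centralizer_iff.mp (hle (Commute.refl x) h.symm)))
    (le_centralizer_iff.mp (hle h (Commute.refl y)))

open scoped IsMulCommutative in
theorem exists_commute_sup_zpowers_eq_top [Finite G] {p : ℕ} (hp : p.Prime)
    (hc : ∀ a b : G, ⁅a, b⁆ ∈ center G) (hcp : ∀ a b : G, ⁅a, b⁆ ^ p = 1)
    (hZ : Nat.card (center G) < p ^ 3) {f₁ f₂ f₃ : G}
    (htop : center G ⊔ zpowers f₁ ⊔ zpowers f₂ ⊔ zpowers f₃ = ⊤) :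
    ∃ x y g : G, Commute x y ∧ center G ⊔ zpowers x ⊔ zpowers y ⊔ zpowers g = ⊤ := by
  let c : G → G → center G := fun a b ↦ ⟨⁅a, b⁆, hc a b⟩
  have hcp' : ∀ a b, c a b ^ p = 1 := fun a b ↦ Subtype.ext (hcp a b)
  obtain ⟨s, t, h | h | h⟩ := exists_mul_zpow_mul_zpow_eq_one_or_of_card_lt hp hZ
    (hcp' f₁ f₂) (hcp' f₁ f₃) (hcp' f₂ f₃) <;>
    replace h := congrArg Subtype.val h <;> push_cast [c] at h
  · refine exists_commute_of_commutatorElement_relation hc htop (α := -t) (β := s) ?_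
    rwa [commutatorElement_zpow_neg]
  · refine exists_commute_of_commutatorElement_relation hc (b := f₃) (c := f₂)
      (by rwa [sup_right_comm]) (α := t) (β := s) h
  · refine exists_commute_of_commutatorElement_relation hc (a := f₂) (b := f₃) (c := f₁)
      (by rwa [sup_right_comm _ (zpowers f₃), sup_right_comm _ (zpowers f₂)])
      (α := t) (β := -s) ?_
    rwa [commutatorElement_zpow_neg]

end Subgroups

theorem stmt_2_general (p : ℕ) (hp : p.Prime) (Q : Type*) [Group Q] [Finite Q]
    (hnab : ¬ ∀ a b : Q, a * b = b * a)
    (hZcomm : Subgroup.center Q = commutator Q)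
    (helem : ∀ x ∈ Subgroup.center Q, x ^ p = 1)
    (hZcard : Nat.card (Subgroup.center Q) = p ^ 2)
    (hQZcard : Nat.card (Q ⧸ Subgroup.center Q) = p ^ 3) :
    ∃! A : Subgroup Q, (∀ a ∈ A, ∀ b ∈ A, a * b = b * a) ∧
      Nat.card A = p ^ 4 ∧ A.index = p := by
  have hc : ∀ a b : Q, ⁅a, b⁆ ∈ center Q := fun a b ↦ by
    rw [hZcomm]; exact commutator_mem_commutator (mem_top a) (mem_top b)
  have hcp : ∀ a b : Q, ⁅a, b⁆ ^ p = 1 := fun a b ↦ helem _ (hc a b)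
  have hZindex : (center Q).index = p ^ 3 := by rw [index_eq_card, hQZcard]
  have hQcard : Nat.card Q = p ^ 5 := by rw [← card_mul_index (center Q), hZcard, hZindex]; ring
  obtain ⟨f₁, f₂, f₃, hf⟩ := exists_sup_zpowers_sup_zpowers_sup_zpowers_eq_top hp hZindex.dvd
  obtain ⟨x, y, g, hxy, htop⟩ := exists_commute_sup_zpowers_eq_top hp hc hcp
    (by rw [hZcard]; exact Nat.pow_lt_pow_right hp.one_lt (by norm_num)) hf
  set A := center Q ⊔ zpowers x ⊔ zpowers y
  have hAc : A ≤ centralizer A := center_sup_zpowers_sup_zpowers_le_centralizer hxy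
  have : A.Normal :=
    Normal.of_commutator_le _ (by rw [← hZcomm]; exact le_sup_left.trans le_sup_left)
  have hA_ne_top : A ≠ ⊤ := fun h ↦ hnab fun a b ↦ hAc (h ▸ mem_top b) a (h ▸ mem_top a)
  have hgA : g ^ p ∈ A :=
    mem_sup_left (mem_sup_left (pow_mem_center_of_commutatorElement_pow hc hcp g))
  have hAi : A.index = p :=
    ((Nat.dvd_prime hp).mp (index_dvd_of_sup_zpowers_eq_top hgA htop)).resolve_left
      (index_eq_one.not.mpr hA_ne_top)
  have hAcard : Nat.card A = p ^ 4 := by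
    have := card_mul_index A
    rw [hAi, hQcard] at this
    exact Nat.eq_of_mul_eq_mul_right hp.pos (this.trans (pow_succ p 4))
  refine ⟨A, ⟨fun a ha b hb ↦ hAc hb a ha, hAcard, hAi⟩, fun B ⟨hB, _, hBi⟩ ↦ ?_⟩
  refine eq_of_le_centralizer_of_index_eq_prime hp ?_
    (fun b hb ↦ mem_centralizer_iff.mpr fun a ha ↦ hB a ha b hb) hAc hBi hAi
  rw [hZcard, hQcard, ← pow_add]
  exact Nat.pow_lt_pow_right hp.one_lt (by norm_num)

/-- Let `p` be a prime and `Q` a finite nonabelian `p`-group with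
`Z(Q) = [Q,Q]` elementary abelian, `|Z(Q)| = p²` and `|Q/Z(Q)| = p³` (so `|Q| = p⁵`).
Then `Q` has exactly one abelian subgroup of order `p⁴`, i.e. of index `p`. -/
theorem stmt_2 (p : ℕ) (hp : p.Prime) (Q : Type*) [Group Q] [Finite Q]
    (hpq : IsPGroup p Q)
    (hnab : ¬ ∀ a b : Q, a * b = b * a)
    (hZcomm : Subgroup.center Q = commutator Q)
    (helem : ∀ x ∈ Subgroup.center Q, x ^ p = 1)
    (hZcard : Nat.card (Subgroup.center Q) = p ^ 2)
    (hQZcard : Nat.card (Q ⧸ Subgroup.center Q) = p ^ 3) :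
    ∃! A : Subgroup Q, (∀ a ∈ A, ∀ b ∈ A, a * b = b * a) ∧
      Nat.card A = p ^ 4 ∧ A.index = p :=
  stmt_2_general p hp Q hnab hZcomm helem hZcard hQZcard
end

section
/- Fix a prime p, a finite p-group G, a normal elementary abelian subgroup A ⊴ G, and an element x ∈ G \ A with x^p ∈ A. Define Φ_x : A → A by Φ_x(a) = xax⁻¹·a⁻¹ (this lies in A since A is normal). Then for every a ∈ A one has (ax)^p = x^p if and only if the (p−1)-fold iterate Φ_x^{p−1}(a) equals 1. -/
open Polynomial Finset

private lemma aux_end_pow (p : ℕ) (hp : p.Prime) (M : Type*) [AddCommGroup M]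
    [Module (ZMod p) M] (L : Module.End (ZMod p) M) (a : M) :
    (fun b => L b - b)^[p - 1] a = ∑ i ∈ Finset.range p, (L ^ i) a := by
  haveI : Fact p.Prime := ⟨hp⟩
  have hpoly : ((X : (ZMod p)[X]) - 1) ^ (p - 1) = ∑ i ∈ Finset.range p, (X : (ZMod p)[X]) ^ i := by
    have hX : ((X : (ZMod p)[X]) - 1) ≠ 0 := by
      intro h
      have h2 := Polynomial.X_sub_C_ne_zero (R := ZMod p) 1
      rw [Polynomial.C_1] at h2
      exact h2 h
    apply mul_right_cancel₀ hX
    rw [← pow_succ, Nat.sub_add_cancel hp.one_le, geom_sum_mul]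
    have h3 : ((X : (ZMod p)[X]) - 1) ^ p = (X : (ZMod p)[X]) ^ p - 1 ^ p := sub_pow_char _ _
    rw [h3, one_pow]
  have hend : (L - 1) ^ (p - 1) = ∑ i ∈ Finset.range p, L ^ i := by
    have h := congrArg (Polynomial.aeval L) hpoly
    simpa [map_sub, map_pow, map_sum] using h
  have hfun : (fun b : M => L b - b) = ⇑(L - 1) := by
    ext b
    simp
  rw [hfun, ← Module.End.pow_apply, hend, LinearMap.sum_apply]

private lemma aux_prod (p : ℕ) (hp : p.Prime) (H : Type*) [CommGroup H]
    (hel : ∀ h : H, h ^ p = 1) (φ : H →* H) (a : H) :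
    (fun b => φ b * b⁻¹)^[p - 1] a = ∏ i ∈ Finset.range p, φ^[i] a := by
  haveI : NeZero p := ⟨hp.ne_zero⟩
  letI : Module (ZMod p) (Additive H) := AddCommGroup.zmodModule (fun b => by
    apply Additive.toMul.injective
    rw [toMul_nsmul]
    simpa using hel (Additive.toMul b))
  have key := aux_end_pow p hp (Additive H)
    ((MonoidHom.toAdditive φ).toZModLinearMap p) (Additive.ofMul a)
  simp only [Module.End.pow_apply, AddMonoidHom.coe_toZModLinearMap] at key
  -- correspondence for single applications of the additive hom
  have happ : ∀ b : Additive H,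
      (MonoidHom.toAdditive φ) b = Additive.ofMul (φ (Additive.toMul b)) := fun _ => rfl
  -- correspondence for iterates of b ↦ φ b * b⁻¹
  have hcor : ∀ (k : ℕ) (b : H),
      (fun c => φ c * c⁻¹)^[k] b
        = Additive.toMul ((fun c => (MonoidHom.toAdditive φ) c - c)^[k] (Additive.ofMul b)) := by
    intro k
    induction k with
    | zero => intro b; rfl
    | succ n ih =>
        intro b
        rw [Function.iterate_succ_apply', Function.iterate_succ_apply', ih b]
        rw [toMul_sub, happ]
        simp [div_eq_mul_inv]
  -- correspondence for iterates of φ itself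
  have hcor2 : ∀ (i : ℕ),
      Additive.toMul ((⇑(MonoidHom.toAdditive φ))^[i] (Additive.ofMul a)) = φ^[i] a := by
    intro i
    induction i with
    | zero => rfl
    | succ n ih =>
        rw [Function.iterate_succ_apply', Function.iterate_succ_apply', ← ih, happ]
        simp
  rw [hcor (p - 1) a, key, toMul_sum]
  exact Finset.prod_congr rfl (fun i _ => hcor2 i)

/-- Fix a prime `p`, a finite `p`-group `G`, a normal elementary abelian
subgroup `A ⊴ G`, and `x ∈ G \ A` with `x^p ∈ A`.  Let `Φ_x(a) = x a x⁻¹ a⁻¹` (which lies in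
`A` for `a ∈ A`, since `A` is normal).  Then for every `a ∈ A`, `(a x)^p = x^p` if and only
if the `(p−1)`-fold iterate of `Φ_x` at `a` equals `1`. -/
theorem stmt_4 (p : ℕ) (hp : p.Prime) (G : Type*) [Group G] [Finite G]
    (hpg : IsPGroup p G) (A : Subgroup G) (hA : A.Normal)
    (hab : ∀ a ∈ A, ∀ b ∈ A, a * b = b * a)
    (helem : ∀ a ∈ A, a ^ p = 1)
    (x : G) (hx : x ∉ A) (hxp : x ^ p ∈ A) :
    ∀ a ∈ A, ((a * x) ^ p = x ^ p ↔ (fun g : G => x * g * x⁻¹ * g⁻¹)^[p - 1] a = 1) := by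
  classical
  letI : CommGroup A :=
    { (inferInstance : Group A) with
      mul_comm := fun b c => Subtype.ext (hab b b.2 c c.2) }
  have hel : ∀ b : A, b ^ p = 1 := by
    intro b
    apply Subtype.ext
    push_cast
    exact helem _ b.2
  intro a ha
  set a' : A := ⟨a, ha⟩ with ha'
  -- conjugation by x as a monoid hom on A
  let φ : A →* A :=
    { toFun := fun b => ⟨x * (b : G) * x⁻¹, hA.conj_mem (b : G) b.2 x⟩
      map_one' := by apply Subtype.ext; simp
      map_mul' := fun b c => by apply Subtype.ext; push_cast; group }
  -- ψ is Φ_x restricted to A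
  set ψ : A → A := fun b => φ b * b⁻¹ with hψ
  -- iterates of Φ_x on coercions
  have hiter : ∀ (k : ℕ) (b : A),
      (fun g : G => x * g * x⁻¹ * g⁻¹)^[k] (b : G) = ((ψ^[k] b : A) : G) := by
    intro k
    induction k with
    | zero => intro b; rfl
    | succ n ih =>
        intro b
        rw [Function.iterate_succ_apply', Function.iterate_succ_apply', ih b]
        rfl
  -- conjugation powers
  have hconj : ∀ i : ℕ, ((φ^[i] a' : A) : G) = x ^ i * a * (x ^ i)⁻¹ := by
    intro i
    induction i with
    | zero => simp [ha']
    | succ n ih =>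
        rw [Function.iterate_succ_apply', pow_succ]
        show x * ((φ^[n] a' : A) : G) * x⁻¹ = _
        rw [ih]
        group
  -- expansion of (a*x)^n
  have hexp : ∀ n : ℕ,
      (a * x) ^ n = ((∏ i ∈ Finset.range n, φ^[i] a' : A) : G) * x ^ n := by
    intro n
    induction n with
    | zero => simp
    | succ n ih =>
        rw [pow_succ, ih, Finset.prod_range_succ]
        push_cast
        rw [hconj n]
        group
  have hleft : (a * x) ^ p = x ^ p
      ↔ (∏ i ∈ Finset.range p, φ^[i] a' : A) = 1 := by
    rw [hexp p]
    constructor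
    · intro h
      have h2 : ((∏ i ∈ Finset.range p, φ^[i] a' : A) : G) = 1 :=
        mul_right_cancel (b := x ^ p) (by rw [h, one_mul])
      exact Subtype.ext h2
    · intro h
      rw [h]
      simp
  have hmain : ψ^[p - 1] a' = ∏ i ∈ Finset.range p, φ^[i] a' := by
    rw [hψ]
    exact aux_prod p hp A hel φ a'
  rw [hleft, hiter (p - 1) a', ← hmain]
  constructor
  · intro h
    rw [h]
    rfl
  · intro h
    exact Subtype.ext h
end

section
/- Let Sp₄(F₃) be the group of 4×4 matrices g over F₃ satisfying gᵀJg = J, where J is the block matrix [[0, I₂], [−I₂, 0]]. Let X and Y be symmetric invertible 2×2 matrices over F₃, and let g = [[I₂, X], [0, I₂]] and h = [[I₂, Y], [0, I₂]] (block matrices; both lie in Sp₄(F₃) and have order 3). Then g and h are conjugate in Sp₄(F₃) if and only if det X = det Y. -/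
open Matrix

private lemma sp7_scalar : ∀ a b d : ZMod 3, a*d - b*b ≠ 0 →
    ∃ p q r s : ZMod 3,
      (p*a+q*b)*p + (p*b+q*d)*q = 1 ∧
      (p*a+q*b)*r + (p*b+q*d)*s = 0 ∧
      (r*a+s*b)*p + (r*b+s*d)*q = 0 ∧
      (r*a+s*b)*r + (r*b+s*d)*s = a*d - b*b ∧
      p*s - q*r ≠ 0 := by decide

private lemma sp7_sq (u : ZMod 3) (h : u ≠ 0) : u * u = 1 := by
  revert h; revert u; decide

private lemma sp7_congr (X : Matrix (Fin 2) (Fin 2) (ZMod 3)) (hX : Xᵀ = X)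
    (hXu : IsUnit X.det) :
    ∃ A : Matrix (Fin 2) (Fin 2) (ZMod 3), IsUnit A.det ∧
      A * X * Aᵀ = !![1, 0; 0, X.det] := by
  have hb : X 1 0 = X 0 1 := (congrFun (congrFun hX 1) 0).symm
  have hdet : X.det = X 0 0 * X 1 1 - X 0 1 * X 0 1 := by
    rw [Matrix.det_fin_two, hb]
  have hne : X 0 0 * X 1 1 - X 0 1 * X 0 1 ≠ 0 := hdet ▸ hXu.ne_zero
  obtain ⟨p, q, r, s, h1, h2, h3, h4, h5⟩ := sp7_scalar (X 0 0) (X 0 1) (X 1 1) hne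
  refine ⟨!![p, q; r, s], ?_, ?_⟩
  · rw [Matrix.det_fin_two_of]; exact isUnit_iff_ne_zero.mpr h5
  · have hXe : X = !![X 0 0, X 0 1; X 0 1, X 1 1] := by
      conv_lhs => rw [Matrix.eta_fin_two X, hb]
    rw [hdet]
    nth_rewrite 1 [hXe]
    ext i j
    fin_cases i <;> fin_cases j <;>
      simp [Matrix.mul_apply, Fin.sum_univ_succ, Matrix.vecHead, Matrix.vecTail] <;>
      first | linear_combination h1 | linear_combination h2 | linear_combination h3 | linear_combination h4

/-- Let `X`, `Y` be symmetric invertible 2×2 matrices over `F₃`, and let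
`g = [[I₂, X], [0, I₂]]`, `h = [[I₂, Y], [0, I₂]]` (both lie in `Sp₄(F₃)` and have order
3).  Then `g` and `h` are conjugate in `Sp₄(F₃)` if and only if `det X = det Y`. -/
theorem stmt_7 (X Y : Matrix (Fin 2) (Fin 2) (ZMod 3))
    (hX : Xᵀ = X) (hY : Yᵀ = Y)
    (hXunit : IsUnit X.det) (hYunit : IsUnit Y.det) :
    (∃ c ∈ Matrix.symplecticGroup (Fin 2) (ZMod 3),
        c * Matrix.fromBlocks 1 X 0 1 = Matrix.fromBlocks 1 Y 0 1 * c) ↔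
      X.det = Y.det := by
  constructor
  · rintro ⟨c, hmem, heq⟩
    set P := c.toBlocks₁₁ with hP
    set Q := c.toBlocks₁₂ with hQ
    set R := c.toBlocks₂₁ with hR
    set S := c.toBlocks₂₂ with hS
    have hc : c = fromBlocks P Q R S := (fromBlocks_toBlocks c).symm
    rw [hc, Matrix.fromBlocks_multiply, Matrix.fromBlocks_multiply,
      Matrix.fromBlocks_inj] at heq
    obtain ⟨e11, e12, e21, e22⟩ := heq
    simp only [Matrix.mul_one, Matrix.mul_zero, Matrix.one_mul, Matrix.zero_mul,
      add_zero, zero_add] at e11 e12 e21 e22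
    -- e11 : P = P + Y * R ; e22 : R * X + S = S
    have hR0 : R = 0 := by
      have hRX : R * X = 0 := by
        have := e22
        -- R * X + S = S
        have h' : R * X + S = 0 + S := by rw [this, zero_add]
        exact add_right_cancel h'
      calc R = R * X * X⁻¹ := by rw [Matrix.mul_nonsing_inv_cancel_right _ _ hXunit]
        _ = 0 := by rw [hRX, Matrix.zero_mul]
    have hPX : P * X = Y * S := by
      have h' : P * X + Q = Y * S + Q := by rw [e12, add_comm]
      exact add_right_cancel h'
    -- symplectic condition gives P * Sᵀ = 1
    rw [hc, SymplecticGroup.mem_iff, Matrix.J, Matrix.fromBlocks_transpose,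
      Matrix.fromBlocks_multiply, Matrix.fromBlocks_multiply, hR0,
      Matrix.fromBlocks_inj] at hmem
    obtain ⟨m11, m12, m21, m22⟩ := hmem
    simp only [Matrix.mul_one, Matrix.mul_zero, Matrix.one_mul, Matrix.zero_mul,
      Matrix.mul_neg, Matrix.neg_mul, Matrix.transpose_zero,
      add_zero, zero_add] at m11 m12 m21 m22
    -- m12 should be : Q * 0ᵀ + (-P) * Sᵀ = -1 simplified
    have hPS : P * Sᵀ = 1 := by
      have := m12
      rw [neg_eq_iff_eq_neg] at this
      rw [this, neg_neg]
    have hdetPS : P.det * S.det = 1 := by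
      have := congrArg Matrix.det hPS
      rwa [Matrix.det_mul, Matrix.det_transpose, Matrix.det_one] at this
    have hdPX := congrArg Matrix.det hPX
    rw [Matrix.det_mul, Matrix.det_mul] at hdPX
    have hPne : P.det ≠ 0 := by
      intro h0
      rw [h0, zero_mul] at hdetPS
      exact zero_ne_one hdetPS
    have hsq := sp7_sq P.det hPne
    calc X.det = (P.det * P.det) * X.det := by rw [hsq, one_mul]
      _ = P.det * (Y.det * S.det) := by rw [mul_assoc, hdPX]
      _ = Y.det * (P.det * S.det) := by ring
      _ = Y.det := by rw [hdetPS, mul_one]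
  · intro hdet
    obtain ⟨A, hAu, hA⟩ := sp7_congr X hX hXunit
    obtain ⟨B, hBu, hB⟩ := sp7_congr Y hY hYunit
    have hBu' : IsUnit B := (Matrix.isUnit_iff_isUnit_det B).mpr hBu
    set C := B⁻¹ * A with hCdef
    have hBC : B * C = A := by
      rw [hCdef, ← Matrix.mul_assoc, Matrix.mul_nonsing_inv _ hBu, Matrix.one_mul]
    have hCu : IsUnit C.det := by
      have hd : B.det * C.det = A.det := by rw [← Matrix.det_mul, hBC]
      exact isUnit_of_mul_isUnit_right (hd ▸ hAu)
    have hCXC : C * X * Cᵀ = Y := by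
      have h1 : C * X * Cᵀ = B⁻¹ * (A * X * Aᵀ) * (B⁻¹)ᵀ := by
        rw [hCdef, Matrix.transpose_mul]
        noncomm_ring
      rw [h1, hA, hdet, ← hB, Matrix.transpose_nonsing_inv, Matrix.mul_assoc B Y Bᵀ,
        Matrix.nonsing_inv_mul_cancel_left _ _ hBu,
        Matrix.mul_nonsing_inv_cancel_right _ _ (by rwa [Matrix.det_transpose])]
    have hCTu : IsUnit Cᵀ.det := by rwa [Matrix.det_transpose]
    refine ⟨fromBlocks C 0 0 (C⁻¹)ᵀ, ?_, ?_⟩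
    · rw [SymplecticGroup.mem_iff, Matrix.J, Matrix.fromBlocks_transpose,
        Matrix.fromBlocks_multiply, Matrix.fromBlocks_multiply]
      simp [Matrix.mul_nonsing_inv _ hCu, ← Matrix.transpose_nonsing_inv,
          ← Matrix.transpose_mul, Matrix.mul_nonsing_inv _ hCu]
    · rw [Matrix.fromBlocks_multiply, Matrix.fromBlocks_multiply]
      have key : C * X = Y * (C⁻¹)ᵀ := by
        rw [Matrix.transpose_nonsing_inv, ← hCXC]
        rw [Matrix.mul_nonsing_inv_cancel_right _ _ hCTu]
      simp [key]
end

section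
/- Let p be a prime, G a finite group, and G₀ ⊴ G a normal subgroup whose index [G : G₀] is prime to p. Then G₀ has a strongly p-embedded subgroup if and only if G has a strongly p-embedded subgroup. -/
/-!
The proof goes through the Sylow intersection graph of a finite group: its vertices are the
Sylow `p`-subgroups, two of them adjacent when they intersect nontrivially. A group of order
divisible by `p` has a strongly `p`-embedded subgroup if and only if this graph is disconnected.
The stabilizer of a connected component is strongly `p`-embedded; conversely, if `H` is strongly
`p`-embedded and contains the Sylow subgroup `P`, the component of `P` consists of the
`H`-conjugates of `P` only.

Since `G₀` is normal of index prime to `p`, every `p`-subgroup of `G` lies in `G₀`, so `G` and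
`G₀` have the same Sylow subgroups and isomorphic Sylow graphs, and `p` divides both orders or
neither.
-/

open Pointwise

/-- A proper subgroup `H < G` is strongly `p`-embedded if `p` divides `|H|` and, for every
`g ∈ G` with `g ∉ H`, `p` does not divide `|H ∩ gHg⁻¹|`. -/
def IsStronglyPEmbedded (p : ℕ) {G : Type*} [Group G] (H : Subgroup G) : Prop :=
  H ≠ ⊤ ∧ (p ∣ Nat.card H) ∧
    ∀ g : G, g ∉ H →
      ¬ (p ∣ Nat.card ↥(H ⊓ Subgroup.map (MulAut.conj g).toMonoidHom H))

section PGroup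

variable {p : ℕ} {G : Type*} [Group G] [Fact p.Prime]

lemma IsPGroup.dvd_card_of_ne_bot {P : Subgroup G} (hP : IsPGroup p P) (h : P ≠ ⊥) :
    p ∣ Nat.card P :=
  hP.card_eq_or_dvd.resolve_left (Subgroup.card_eq_one.not.2 h)

variable [Finite G]

lemma IsPGroup.le_of_not_dvd_index {P N : Subgroup G} (hP : IsPGroup p P) [N.Normal]
    (hN : ¬ p ∣ N.index) : P ≤ N := by
  obtain ⟨k, hk⟩ := hP.exists_card_eq
  rw [← Subgroup.relIndex_eq_one]
  exact Nat.eq_one_of_dvd_coprimes ((Fact.out : p.Prime).coprime_pow_of_not_dvd hN)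
    (N.relIndex_dvd_index_of_normal P) (hk ▸ N.relIndex_dvd_card P)

lemma Subgroup.exists_isPGroup_ne_bot_le {K : Subgroup G} (h : p ∣ Nat.card K) :
    ∃ Q ≤ K, IsPGroup p Q ∧ Q ≠ ⊥ := by
  obtain ⟨⟨x, hxK⟩, hx⟩ := exists_prime_orderOf_dvd_card' p h
  rw [Subgroup.orderOf_mk] at hx
  refine ⟨Subgroup.zpowers x, Subgroup.zpowers_le.2 hxK, IsPGroup.of_card (n := 1) ?_, ?_⟩
  · rw [Nat.card_zpowers, hx, pow_one]
  · rw [Ne, Subgroup.zpowers_eq_bot]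
    rintro rfl
    exact (Fact.out : p.Prime).one_lt.ne' (hx ▸ orderOf_one)

lemma IsPGroup.lt_inf_normalizer {P R : Subgroup G} (hP : IsPGroup p P) (hRP : R < P) :
    R < P ⊓ Subgroup.normalizer (R : Set G) := by
  have := hP.isNilpotent
  have hlt : R.subgroupOf P < ⊤ := by
    rw [lt_top_iff_ne_top, Ne, Subgroup.subgroupOf_eq_top]
    exact hRP.not_ge
  have := Group.normalizerCondition_of_isNilpotent _ hlt
  rwa [← Subgroup.subgroupOf_normalizer_eq hRP.le, ← Subgroup.map_subtype_lt_map_subtype,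
    Subgroup.subgroupOf_map_subtype, Subgroup.subgroupOf_map_subtype, inf_of_le_left hRP.le,
    inf_comm] at this

lemma Sylow.exists_mem_le_smul {P : Sylow p G} {H Q : Subgroup G}
    (hPH : (P : Subgroup G) ≤ H) (hQH : Q ≤ H) (hQ : IsPGroup p Q) :
    ∃ h ∈ H, Q ≤ ↑(h • P) := by
  obtain ⟨R, hR⟩ := hQ.comap_subtype (K := H).exists_le_sylow
  obtain ⟨h, rfl⟩ := MulAction.exists_smul_eq H (P.subtype hPH) R
  rw [Sylow.smul_subtype, Sylow.coe_subtype] at hR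
  exact ⟨h, h.2, fun q hq => Subgroup.mem_subgroupOf.1 (hR (Subgroup.mem_subgroupOf.2
    (show ((⟨q, hQH hq⟩ : H) : G) ∈ Q from hq)))⟩

end PGroup

def sylowGraph (p : ℕ) (G : Type*) [Group G] : SimpleGraph (Sylow p G) where
  Adj P Q := P ≠ Q ∧ (P : Subgroup G) ⊓ Q ≠ ⊥
  symm := ⟨fun P Q h => ⟨h.1.symm, by rw [inf_comm]; exact h.2⟩⟩
  loopless := ⟨fun _ h => h.1 rfl⟩

namespace sylowGraph

variable {p : ℕ} {G : Type*} [Group G]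

lemma reachable_of_inf_ne_bot {P Q : Sylow p G} (h : (P : Subgroup G) ⊓ Q ≠ ⊥) :
    (sylowGraph p G).Reachable P Q := by
  by_cases hPQ : P = Q
  · exact hPQ ▸ .refl P
  · exact SimpleGraph.Adj.reachable ⟨hPQ, h⟩

def conj (g : G) : sylowGraph p G ≃g sylowGraph p G where
  toEquiv := MulAction.toPerm g
  map_rel_iff' {P Q} := by
    simp only [sylowGraph, MulAction.toPerm_apply, Sylow.coe_subgroup_smul, ← Subgroup.smul_inf,
      ne_eq, smul_eq_iff_eq_inv_smul, inv_smul_smul, Subgroup.smul_bot]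

lemma adj_smul_iff (g : G) {P Q : Sylow p G} :
    (sylowGraph p G).Adj (g • P) (g • Q) ↔ (sylowGraph p G).Adj P Q :=
  (conj g).map_adj_iff

lemma reachable_smul_iff (g : G) {P Q : Sylow p G} :
    (sylowGraph p G).Reachable (g • P) (g • Q) ↔ (sylowGraph p G).Reachable P Q :=
  SimpleGraph.Iso.reachable_iff (φ := conj g)

noncomputable def isoOfForallLe {N : Subgroup G} (hN : ∀ P : Sylow p G, (P : Subgroup G) ≤ N) :
    sylowGraph p G ≃g sylowGraph p N where
  toEquiv := Equiv.ofBijective (fun P => P.subtype (hN P)) <| by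
    refine ⟨fun P Q h => Sylow.subtype_injective h, fun R => ?_⟩
    obtain ⟨P, hP⟩ := R.exists_comap_subtype_eq
    exact ⟨P, Sylow.ext hP⟩
  map_rel_iff' {P Q} := by
    show (P.subtype (hN P) ≠ Q.subtype (hN Q) ∧
      (P : Subgroup G).subgroupOf N ⊓ (Q : Subgroup G).subgroupOf N ≠ ⊥) ↔ _
    rw [Subgroup.subgroupOf, Subgroup.subgroupOf, ← Subgroup.comap_inf, ← Subgroup.subgroupOf,
      ne_eq, ne_eq, Subgroup.subgroupOf_eq_bot,
      disjoint_of_le_iff_left_eq_bot (inf_le_left.trans (hN P))]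
    exact and_congr_left' (not_congr ⟨Sylow.subtype_injective, fun h => h ▸ rfl⟩)

def componentStabilizer (P₀ : Sylow p G) : Subgroup G where
  carrier := {g | (sylowGraph p G).Reachable (g • P₀) P₀}
  one_mem' := by simp
  mul_mem' {a b} ha hb := by
    rw [Set.mem_ofPred_eq, mul_smul]
    exact ((reachable_smul_iff a).2 hb).trans ha
  inv_mem' {a} ha := by
    rw [Set.mem_ofPred_eq, ← reachable_smul_iff a, smul_inv_smul]
    exact ha.symm

variable {P₀ : Sylow p G}

lemma mem_componentStabilizer {g : G} :
    g ∈ componentStabilizer P₀ ↔ (sylowGraph p G).Reachable (g • P₀) P₀ :=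
  Iff.rfl

lemma le_componentStabilizer : (P₀ : Subgroup G) ≤ componentStabilizer P₀ := fun g hg => by
  rw [mem_componentStabilizer, Sylow.smul_eq_iff_mem_normalizer.2 (Subgroup.le_normalizer hg)]

theorem isStronglyPEmbedded_componentStabilizer [Finite G] [Fact p.Prime]
    (hpG : p ∣ Nat.card G) {Q₀ : Sylow p G} (hPQ : ¬ (sylowGraph p G).Reachable P₀ Q₀) :
    IsStronglyPEmbedded p (componentStabilizer P₀) := by
  set H := componentStabilizer P₀
  refine ⟨fun htop => ?_, ?_, fun g hg hdvd => hg ?_⟩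
  · obtain ⟨g, rfl⟩ := MulAction.exists_smul_eq G P₀ Q₀
    exact hPQ (mem_componentStabilizer.1 ((Subgroup.eq_top_iff' _).1 htop g)).symm
  · exact (P₀.dvd_card_of_dvd_card hpG).trans (Subgroup.card_dvd_of_le le_componentStabilizer)
  -- A nontrivial `p`-subgroup `Q` of `H ⊓ gHg⁻¹` lies in a Sylow subgroup `h • P₀` of the
  -- component of `P₀` and in a Sylow subgroup `(g * k) • P₀` of the component of
  -- `g • P₀`, so these two components coincide.
  obtain ⟨Q, hQ, hQp, hQbot⟩ := Subgroup.exists_isPGroup_ne_bot_le hdvd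
  have hQ' : MulAut.conj g⁻¹ • Q ≤ H := by
    rw [map_inv, ← Subgroup.subset_pointwise_smul_iff]
    exact hQ.trans inf_le_right
  obtain ⟨h, hh, hQh⟩ :=
    Sylow.exists_mem_le_smul le_componentStabilizer (hQ.trans inf_le_left) hQp
  obtain ⟨k, hk, hQk⟩ := Sylow.exists_mem_le_smul le_componentStabilizer hQ' (hQp.map _)
  have hQgk : Q ≤ ↑((g * k) • P₀) := by
    rwa [map_inv, ← Subgroup.subset_pointwise_smul_iff, ← Sylow.coe_subgroup_smul,
      ← mul_smul] at hQk
  have hgk : (sylowGraph p G).Reachable (g • P₀) ((g * k) • P₀) := by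
    rw [mul_smul, reachable_smul_iff]
    exact hk.symm
  have hkh : (sylowGraph p G).Reachable ((g * k) • P₀) (h • P₀) :=
    reachable_of_inf_ne_bot (ne_bot_of_le_ne_bot hQbot (le_inf hQgk hQh))
  exact (hgk.trans hkh).trans hh

end sylowGraph

namespace IsStronglyPEmbedded

variable {p : ℕ} {G : Type*} [Group G] {H : Subgroup G}

lemma mem_of_le_inf (hH : IsStronglyPEmbedded p H) {Q : Subgroup G} {g : G}
    (hQ : Q ≤ H ⊓ MulAut.conj g • H) (hpQ : p ∣ Nat.card Q) : g ∈ H :=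
  by_contra fun hg => hH.2.2 g hg (hpQ.trans (Subgroup.card_dvd_of_le hQ))

lemma normalizer_le (hH : IsStronglyPEmbedded p H) {Q : Subgroup G} (hQH : Q ≤ H)
    (hpQ : p ∣ Nat.card Q) : Subgroup.normalizer (Q : Set G) ≤ H := by
  refine fun n hn => hH.mem_of_le_inf (le_inf hQH fun x hx => ?_) hpQ
  rw [Subgroup.mem_pointwise_smul_iff_inv_smul_mem, ← map_inv, MulAut.smul_def,
    MulAut.conj_apply]
  exact hQH ((Subgroup.mem_normalizer_iff.1 (inv_mem hn) x).1 hx)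

variable [Fact p.Prime]

lemma mem_of_adj_smul (hH : IsStronglyPEmbedded p H) {P : Sylow p G}
    (hPH : (P : Subgroup G) ≤ H) {g : G} (hadj : (sylowGraph p G).Adj P (g • P)) : g ∈ H := by
  refine hH.mem_of_le_inf (inf_le_inf hPH ?_) (IsPGroup.dvd_card_of_ne_bot P.2.to_inf_left hadj.2)
  rw [Sylow.coe_subgroup_smul]
  exact Subgroup.pointwise_smul_le_pointwise_smul_iff.2 hPH

variable [Finite G]

lemma exists_sylow_le (hH : IsStronglyPEmbedded p H) :
    ∃ P : Sylow p G, (P : Subgroup G) ≤ H := by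
  obtain ⟨P₁⟩ := (inferInstance : Nonempty (Sylow p H))
  obtain ⟨P, hP⟩ := P₁.exists_comap_subtype_eq
  refine ⟨P, by_contra fun hPH => ?_⟩
  have hpPH : p ∣ Nat.card ↥((P : Subgroup G) ⊓ H) := by
    rw [← Subgroup.subgroupOf_map_subtype, Subgroup.card_map_of_injective H.subtype_injective,
      ← Subgroup.comap_subtype, hP]
    exact P₁.dvd_card_of_dvd_card hH.2.1
  -- `P ⊓ H` is self-normalizing in `P`, which the normalizer condition in `P` forbids.
  exact (P.2.lt_inf_normalizer (inf_lt_left.2 hPH)).not_ge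
    (inf_le_inf_left _ (hH.normalizer_le inf_le_right hpPH))

lemma mem_of_reachable_smul (hH : IsStronglyPEmbedded p H) {P : Sylow p G}
    (hPH : (P : Subgroup G) ≤ H) {g : G} (hreach : (sylowGraph p G).Reachable P (g • P)) :
    g ∈ H := by
  have hcomp : ∀ S, Relation.ReflTransGen (sylowGraph p G).Adj P S →
      ∃ h ∈ H, h • P = S := by
    intro S hS
    induction hS with
    | refl => exact ⟨1, H.one_mem, one_smul G P⟩
    | @tail _ c _ hadj ih =>
      obtain ⟨h, hh, rfl⟩ := ih
      obtain ⟨k, rfl⟩ := MulAction.exists_smul_eq G P c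
      rw [← sylowGraph.adj_smul_iff h⁻¹, inv_smul_smul, ← mul_smul] at hadj
      exact ⟨k, by simpa using H.mul_mem hh (hH.mem_of_adj_smul hPH hadj), rfl⟩
  obtain ⟨h, hh, hhg⟩ := hcomp _ ((SimpleGraph.reachable_iff_reflTransGen _ _).1 hreach)
  have hnorm : h⁻¹ * g ∈ Subgroup.normalizer (P : Set G) := by
    rw [← Sylow.smul_eq_iff_mem_normalizer, mul_smul, ← hhg, inv_smul_smul]
  simpa using H.mul_mem hh (hH.normalizer_le hPH (P.dvd_card_of_dvd_card
    (hH.2.1.trans (Subgroup.card_subgroup_dvd_card H))) hnorm)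

theorem not_preconnected_sylowGraph (hH : IsStronglyPEmbedded p H) :
    ¬ (sylowGraph p G).Preconnected := fun hconn => by
  obtain ⟨P, hPH⟩ := hH.exists_sylow_le
  obtain ⟨g, -, hg⟩ := SetLike.exists_of_lt (lt_top_iff_ne_top.2 hH.1)
  exact hg (hH.mem_of_reachable_smul hPH (hconn P (g • P)))

end IsStronglyPEmbedded

theorem exists_isStronglyPEmbedded_iff {p : ℕ} {G : Type*} [Group G] [Finite G] [Fact p.Prime] :
    (∃ H : Subgroup G, IsStronglyPEmbedded p H) ↔
      p ∣ Nat.card G ∧ ¬ (sylowGraph p G).Preconnected := by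
  refine ⟨fun ⟨H, hH⟩ => ⟨hH.2.1.trans (Subgroup.card_subgroup_dvd_card H),
    hH.not_preconnected_sylowGraph⟩, fun ⟨hpG, hconn⟩ => ?_⟩
  obtain ⟨P, Q, hPQ⟩ : ∃ P Q, ¬ (sylowGraph p G).Reachable P Q := by
    simpa [SimpleGraph.Preconnected] using hconn
  exact ⟨_, sylowGraph.isStronglyPEmbedded_componentStabilizer hpG hPQ⟩

lemma Subgroup.prime_dvd_card_iff_of_not_dvd_index {p : ℕ} {G : Type*} [Group G] (hp : p.Prime)
    {N : Subgroup G} (hN : ¬ p ∣ N.index) : p ∣ Nat.card N ↔ p ∣ Nat.card G := by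
  rw [← N.card_mul_index, hp.dvd_mul, or_iff_left hN]

/-- Let `p` be a prime, `G` a finite group, and `G₀ ⊴ G` a normal subgroup
of index prime to `p`.  Then `G₀` has a strongly `p`-embedded subgroup if and only if `G`
has a strongly `p`-embedded subgroup. -/
theorem stmt_9 (p : ℕ) (hp : p.Prime) (G : Type*) [Group G] [Finite G]
    (G₀ : Subgroup G) (hn : G₀.Normal) (hind : ¬ p ∣ G₀.index) :
    (∃ H : Subgroup ↥G₀, IsStronglyPEmbedded p H) ↔
      ∃ H : Subgroup G, IsStronglyPEmbedded p H := by
  have : Fact p.Prime := ⟨hp⟩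
  have hle : ∀ P : Sylow p G, (P : Subgroup G) ≤ G₀ := fun P => P.2.le_of_not_dvd_index hind
  rw [exists_isStronglyPEmbedded_iff, exists_isStronglyPEmbedded_iff,
    (sylowGraph.isoOfForallLe hle).preconnected_iff,
    G₀.prime_dvd_card_iff_of_not_dvd_index hp hind]
end

section
/- Let p be a prime and G a finite group with a strongly p-embedded subgroup H < G. Then for every normal subgroup K ⊴ G, at least one of the following holds: the image HK/K is strongly p-embedded in G/K, or HK = G, or p does not divide |G/K|. -/
open Subgroup Pointwise

section Aux

variable {p : ℕ} {G : Type*} [Group G]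

lemma map_conj_eq_smul (g : G) (S : Subgroup G) :
    S.map (MulAut.conj g).toMonoidHom = MulAut.conj g • S := rfl

lemma conj_smul_self {H : Subgroup G} {h : G} (hh : h ∈ H) : MulAut.conj h • H = H := by
  refine le_antisymm (Subgroup.conj_smul_le_of_le le_rfl ⟨h, hh⟩) fun y hy => ?_
  rw [Subgroup.mem_pointwise_smul_iff_inv_smul_mem]
  have hinv : (MulAut.conj h)⁻¹ • y = h⁻¹ * y * h := by
    simp [MulAut.smul_def]
  rw [hinv]
  exact H.mul_mem (H.mul_mem (H.inv_mem hh) hy) hh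

lemma card_map_mul_card {G' : Type*} [Group G'] [Finite G] (f : G →* G') (S : Subgroup G) :
    Nat.card (S.map f) * Nat.card (f.ker.subgroupOf S) = Nat.card S := by
  have h1 : (f.comp S.subtype).range = S.map f := by
    rw [MonoidHom.range_comp, Subgroup.range_subtype]
  have h2 : (f.comp S.subtype).ker = f.ker.subgroupOf S := by
    rw [Subgroup.subgroupOf, MonoidHom.comap_ker]
  calc Nat.card (S.map f) * Nat.card (f.ker.subgroupOf S)
      = Nat.card (f.comp S.subtype).range * Nat.card (f.comp S.subtype).ker := by rw [h1, h2]
    _ = Nat.card (↥S ⧸ (f.comp S.subtype).ker) * Nat.card (f.comp S.subtype).ker := by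
        rw [Nat.card_congr (QuotientGroup.quotientKerEquivRange (f.comp S.subtype)).toEquiv]
    _ = Nat.card S := (Subgroup.card_eq_card_quotient_mul_card_subgroup _).symm

lemma exists_sylow_le [Finite G] (hp : p.Prime) {H : Subgroup G}
    (hH : IsStronglyPEmbedded p H) : ∃ P : Sylow p G, (P : Subgroup G) ≤ H := by
  haveI : Fact p.Prime := ⟨hp⟩
  obtain ⟨P₀⟩ : Nonempty (Sylow p ↥H) := inferInstance
  set P : Subgroup G := (P₀ : Subgroup ↥H).map H.subtype with hPdef
  have hPH : P ≤ H := Subgroup.map_subtype_le _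
  have hcard0 : Nat.card ↥H ≠ 0 := Nat.card_pos.ne'
  have hpP : p ∣ Nat.card P := by
    have e : Nat.card P = Nat.card (P₀ : Subgroup ↥H) :=
      (Nat.card_congr (Subgroup.equivMapOfInjective _ _ H.subtype_injective).toEquiv).symm
    rw [e, P₀.card_eq_multiplicity]
    exact dvd_pow_self p (Nat.Prime.factorization_pos_of_dvd hp hcard0 hH.2.1).ne'
  have hPp : IsPGroup p P := P₀.2.map H.subtype
  obtain ⟨Q, hPQ⟩ := hPp.exists_le_sylow
  refine ⟨Q, ?_⟩
  suffices hQP : (Q : Subgroup G) = P by rw [hQP]; exact hPH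
  by_contra hne
  have hlt' : P.subgroupOf Q < ⊤ := by
    refine lt_top_iff_ne_top.mpr fun h => ?_
    exact hne (le_antisymm (Subgroup.subgroupOf_eq_top.mp h) hPQ)
  haveI : Group.IsNilpotent ↥(Q : Subgroup G) := Q.isPGroup'.isNilpotent
  obtain ⟨x, hxn, hxP⟩ :=
    SetLike.exists_of_lt (normalizerCondition_of_isNilpotent (G := ↥(Q : Subgroup G))
      (P.subgroupOf Q) hlt')
  have hxPG : (↑x : G) ∉ P := fun h => hxP (Subgroup.mem_subgroupOf.mpr h)
  have hconj2 : ∀ y : G, y ∈ P → (↑x : G)⁻¹ * y * ↑x ∈ P := by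
    intro y hy
    have hyQ : y ∈ (Q : Subgroup G) := hPQ hy
    have h1 : x * (x⁻¹ * ⟨y, hyQ⟩ * x) * x⁻¹ ∈ P.subgroupOf Q := by
      have he : x * (x⁻¹ * (⟨y, hyQ⟩ : ↥(Q : Subgroup G)) * x) * x⁻¹ = ⟨y, hyQ⟩ := by group
      rw [he]; exact Subgroup.mem_subgroupOf.mpr hy
    have h2 := (Subgroup.mem_normalizer_iff.mp hxn _).mpr h1
    simpa using Subgroup.mem_subgroupOf.mp h2
  by_cases hxH : (↑x : G) ∈ H
  · -- contradiction with maximality of P₀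
    set S : Subgroup G := P ⊔ Subgroup.zpowers (↑x : G) with hS
    have hSQ : S ≤ Q := sup_le hPQ (Subgroup.zpowers_le.mpr x.2)
    have hSp : IsPGroup p S := Q.isPGroup'.to_le hSQ
    have hSH : S ≤ H := sup_le hPH (Subgroup.zpowers_le.mpr hxH)
    have hS'p : IsPGroup p (S.subgroupOf H) :=
      hSp.of_equiv (Subgroup.subgroupOfEquivOfLe hSH).symm
    have hP₀S : (P₀ : Subgroup ↥H) ≤ S.subgroupOf H := by
      intro y hy
      exact Subgroup.mem_subgroupOf.mpr
        ((le_sup_left : P ≤ S) (Subgroup.mem_map_of_mem H.subtype hy))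
    have hmax := P₀.3 hS'p hP₀S
    apply hxPG
    have hxS : (↑x : G) ∈ S := (le_sup_right : _ ≤ S) (Subgroup.mem_zpowers _)
    have hmem : (⟨↑x, hxH⟩ : ↥H) ∈ S.subgroupOf H := Subgroup.mem_subgroupOf.mpr hxS
    rw [hmax] at hmem
    exact Subgroup.mem_map.mpr ⟨⟨↑x, hxH⟩, hmem, rfl⟩
  · exact absurd (by
      rw [map_conj_eq_smul]
      refine hpP.trans (Subgroup.card_dvd_of_le (le_inf hPH ?_))
      intro y hy
      rw [Subgroup.mem_pointwise_smul_iff_inv_smul_mem]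
      have hinv : (MulAut.conj (↑x : G))⁻¹ • y = (↑x : G)⁻¹ * y * ↑x := by
        simp [MulAut.smul_def]
      rw [hinv]
      exact hPH (hconj2 y hy)) (hH.2.2 (↑x) hxH)

lemma exists_conj_le [Finite G] [hp : Fact p.Prime] {K R H : Subgroup G} [K.Normal]
    (P : Sylow p G) (hPH : (P : Subgroup G) ≤ H)
    (hRp : IsPGroup p R) (hRM : R ≤ H ⊔ K) :
    ∃ k ∈ K, R ≤ MulAut.conj k • H := by
  have hPM : (P : Subgroup G) ≤ H ⊔ K := hPH.trans le_sup_left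
  have hR' : IsPGroup p ((R.subgroupOf (H ⊔ K) : Subgroup ↥(H ⊔ K))) := hRp.comap_subtype
  obtain ⟨Q', hQ'⟩ := hR'.exists_le_sylow
  obtain ⟨m, hm⟩ := MulAction.exists_smul_eq ↥(H ⊔ K) (P.subtype hPM) Q'
  have hRm : R.subgroupOf (H ⊔ K) ≤
      ((m • P.subtype hPM : Sylow p ↥(H ⊔ K)) : Subgroup ↥(H ⊔ K)) := by
    rw [hm]; exact hQ'
  have hRc : R ≤ MulAut.conj (↑m : G) • (P : Subgroup G) := by
    intro y hy
    have hyM : y ∈ H ⊔ K := hRM hy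
    have h1 : (⟨y, hyM⟩ : ↥(H ⊔ K)) ∈
        ((m • P.subtype hPM : Sylow p ↥(H ⊔ K)) : Subgroup ↥(H ⊔ K)) :=
      hRm (Subgroup.mem_subgroupOf.mpr hy)
    rw [Sylow.coe_subgroup_smul, Sylow.coe_subtype] at h1
    obtain ⟨s, hs, hsy⟩ := (Subgroup.mem_smul_pointwise_iff_exists _ _ _).mp h1
    refine (Subgroup.mem_smul_pointwise_iff_exists _ _ _).mpr ⟨↑s, Subgroup.mem_subgroupOf.mp hs, ?_⟩
    simpa [MulAut.smul_def] using congrArg (fun z : ↥(H ⊔ K) => (z : G)) hsy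
  have hRH : R ≤ MulAut.conj (↑m : G) • H :=
    hRc.trans (Subgroup.pointwise_smul_le_pointwise_smul_iff.mpr hPH)
  have hmKH : (↑m : G) ∈ ((↑K : Set G) * ↑H) := by
    rw [← Subgroup.normal_mul]
    exact (sup_comm H K) ▸ m.2
  obtain ⟨k, hk, h, hh, hkh⟩ := Set.mem_mul.mp hmKH
  refine ⟨k, hk, ?_⟩
  have heq : MulAut.conj (↑m : G) • H = MulAut.conj k • H := by
    rw [← hkh, map_mul, mul_smul, conj_smul_self hh]
  rwa [heq] at hRH

end Aux

/-- **Statement 11.** Let `p` be a prime and `G` a finite group with a strongly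
`p`-embedded subgroup `H < G`.  Then for every normal subgroup `K ⊴ G`, either the image
`HK/K` is strongly `p`-embedded in `G/K`, or `HK = G`, or `p ∤ |G/K|`. -/
theorem stmt_11 (p : ℕ) (hp : p.Prime) (G : Type*) [Group G] [Finite G]
    (H : Subgroup G) (hH : IsStronglyPEmbedded p H)
    (K : Subgroup G) [K.Normal] :
    IsStronglyPEmbedded p (H.map (QuotientGroup.mk' K)) ∨
      H ⊔ K = ⊤ ∨ ¬ p ∣ Nat.card (G ⧸ K) := by
  haveI : Fact p.Prime := ⟨hp⟩
  by_cases h2 : H ⊔ K = ⊤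
  · exact Or.inr (Or.inl h2)
  by_cases h3 : p ∣ Nat.card (G ⧸ K)
  swap
  · exact Or.inr (Or.inr h3)
  left
  obtain ⟨P, hPH⟩ := exists_sylow_le hp hH
  set f := QuotientGroup.mk' K with hf
  have hker : f.ker = K := QuotientGroup.ker_mk' K
  have hfs : Function.Surjective f := QuotientGroup.mk'_surjective K
  have hcomapH : Subgroup.comap f (H.map f) = H ⊔ K := by
    rw [Subgroup.comap_map_eq, hker]
  refine ⟨?_, ?_, ?_⟩
  · intro htop
    apply h2
    have := congrArg (Subgroup.comap f) htop
    rwa [hcomapH, Subgroup.comap_top] at this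
  · have hGpos : (Nat.card G) ≠ 0 := Nat.card_pos.ne'
    set n := (Nat.card G).factorization p with hn
    have hPcard : Nat.card (P : Subgroup G) = p ^ n := P.card_eq_multiplicity
    have hkey := card_map_mul_card f (P : Subgroup G)
    have hker_pgrp : IsPGroup p (f.ker.subgroupOf (P : Subgroup G)) :=
      IsPGroup.to_subgroup P.isPGroup' _
    obtain ⟨m, hm⟩ := IsPGroup.iff_card.mp hker_pgrp
    have hdvdK : p ^ m ∣ Nat.card K := by
      rw [← hm]
      calc Nat.card (f.ker.subgroupOf (P : Subgroup G))
          = Nat.card ((f.ker ⊓ (P : Subgroup G) : Subgroup G)) := by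
            rw [← Subgroup.subgroupOf_map_subtype]
            exact Nat.card_congr
              (Subgroup.equivMapOfInjective _ _ (P : Subgroup G).subtype_injective).toEquiv
        _ ∣ Nat.card f.ker := Subgroup.card_dvd_of_le inf_le_left
        _ = Nat.card K := by rw [hker]
    have hmn : m + 1 ≤ n := by
      have hdvdG : p ^ (m + 1) ∣ Nat.card G := by
        rw [Subgroup.card_eq_card_quotient_mul_card_subgroup K, pow_succ']
        exact mul_dvd_mul h3 hdvdK
      exact (Nat.Prime.pow_dvd_iff_le_factorization hp hGpos).mp hdvdG
    have hcard_map : Nat.card ((P : Subgroup G).map f) = p ^ (n - m) := by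
      have hpow : p ^ (n - m) * p ^ m = p ^ n := by
        rw [← pow_add, Nat.sub_add_cancel (le_trans (Nat.le_succ m) hmn)]
      rw [hm, hPcard] at hkey
      exact Nat.eq_of_mul_eq_mul_right (pow_pos hp.pos m) (hkey.trans hpow.symm)
    have hpmap : p ∣ Nat.card ((P : Subgroup G).map f) := by
      rw [hcard_map]
      exact dvd_pow_self p (Nat.sub_ne_zero_of_lt (lt_of_lt_of_le (Nat.lt_succ_self m) hmn))
    exact hpmap.trans (Subgroup.card_dvd_of_le (Subgroup.map_mono hPH))
  · intro gb hgb hdvd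
    obtain ⟨g, rfl⟩ := hfs gb
    rw [map_conj_eq_smul] at hdvd
    have hhom : (MulAut.conj (f g)).toMonoidHom.comp f = f.comp (MulAut.conj g).toMonoidHom := by
      ext s
      simp [MulAut.conj_apply]
    have hcomm : MulAut.conj (f g) • (H.map f) = (MulAut.conj g • H).map f := by
      rw [← map_conj_eq_smul, ← map_conj_eq_smul, Subgroup.map_map, Subgroup.map_map, hhom]
    have hcomap2 : Subgroup.comap f (MulAut.conj (f g) • H.map f) = (MulAut.conj g • H) ⊔ K := by
      rw [hcomm, Subgroup.comap_map_eq, hker]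
    set L := Subgroup.comap f (H.map f ⊓ MulAut.conj (f g) • H.map f) with hL
    have hpL : p ∣ Nat.card L := by
      have hkey := card_map_mul_card f L
      have hmapL : L.map f = H.map f ⊓ MulAut.conj (f g) • H.map f :=
        Subgroup.map_comap_eq_self_of_surjective hfs _
      rw [← hmapL] at hdvd
      exact hdvd.trans ⟨_, hkey.symm⟩
    haveI : Fintype ↥L := Fintype.ofFinite ↥L
    rw [Nat.card_eq_fintype_card] at hpL
    obtain ⟨x, hxord⟩ := exists_prime_orderOf_dvd_card p hpL
    have hx0ord : orderOf (↑x : G) = p := by rw [Subgroup.orderOf_coe]; exact hxord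
    set R := Subgroup.zpowers (↑x : G) with hR
    have hRcard : Nat.card R = p := by rw [hR, Nat.card_zpowers, hx0ord]
    have hRp : IsPGroup p R := IsPGroup.of_card (by rw [hRcard, pow_one])
    have hxL : (↑x : G) ∈ L := x.2
    have hR1 : R ≤ H ⊔ K := Subgroup.zpowers_le.mpr (by
      have h1 : f ↑x ∈ H.map f := (Subgroup.mem_comap.mp hxL).1
      exact hcomapH ▸ Subgroup.mem_comap.mpr h1)
    have hR2 : R ≤ (MulAut.conj g • H) ⊔ K := Subgroup.zpowers_le.mpr (by
      have h1 : f ↑x ∈ MulAut.conj (f g) • H.map f := (Subgroup.mem_comap.mp hxL).2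
      exact hcomap2 ▸ Subgroup.mem_comap.mpr h1)
    obtain ⟨k₁, hk₁, hRk₁⟩ := exists_conj_le P hPH hRp hR1
    have hPgH : ((g • P : Sylow p G) : Subgroup G) ≤ MulAut.conj g • H := by
      rw [Sylow.coe_subgroup_smul]
      exact Subgroup.pointwise_smul_le_pointwise_smul_iff.mpr hPH
    obtain ⟨k₂, hk₂, hRk₂⟩ := exists_conj_le (g • P) hPgH hRp hR2
    set w := k₁⁻¹ * (k₂ * g) with hw
    have hwH : w ∈ H := by
      by_contra hwH
      apply hH.2.2 w hwH
      rw [map_conj_eq_smul]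
      have hle : MulAut.conj k₁⁻¹ • R ≤ H ⊓ MulAut.conj w • H := by
        refine le_inf ?_ ?_
        · have h4 := (Subgroup.pointwise_smul_le_pointwise_smul_iff
            (a := MulAut.conj k₁⁻¹)).mpr hRk₁
          rwa [← mul_smul, ← map_mul, inv_mul_cancel, map_one, one_smul] at h4
        · have h5 : R ≤ MulAut.conj (k₂ * g) • H := by
            rwa [map_mul, mul_smul]
          have h4 := (Subgroup.pointwise_smul_le_pointwise_smul_iff
            (a := MulAut.conj k₁⁻¹)).mpr h5
          rwa [← mul_smul, ← map_mul, ← hw] at h4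
      have hcardconj : Nat.card ((MulAut.conj k₁⁻¹ • R : Subgroup G)) = p := by
        rw [← hRcard]
        exact (Nat.card_congr (Subgroup.equivSMul (MulAut.conj k₁⁻¹) R).toEquiv).symm
      exact hcardconj ▸ Subgroup.card_dvd_of_le hle
    apply hgb
    have hfg : f g = f w := by
      have hg : g = k₂⁻¹ * (k₁ * w) := by rw [hw]; group
      have hfk₁ : f k₁ = 1 := by
        have : k₁ ∈ f.ker := by rw [hker]; exact hk₁
        exact this
      have hfk₂ : f k₂ = 1 := by
        have : k₂ ∈ f.ker := by rw [hker]; exact hk₂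
        exact this
      rw [hg, map_mul, map_mul, map_inv, hfk₁, hfk₂]
      simp
    rw [hfg]
    exact Subgroup.mem_map_of_mem f hwH
end

section
/- Fix a prime p, a finite p-group P, and a chain of subgroups P₀ ≤ P₁ ≤ ⋯ ≤ P_m = P each of which is normal in P, with P₀ contained in the Frattini subgroup Φ(P). Let α be an automorphism of P such that α(x)·x⁻¹ ∈ P_{i−1} for every 1 ≤ i ≤ m and every x ∈ P_i. Then the order of α is a power of p. -/
/-!
If a prime `q ≠ p` divided the order of `α`, some power `β` of `α` would have order `q` and would
still stabilise the chain. Walking up the chain, `β` acts trivially on `P / P₀`: for `x ∈ Pᵢ` put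
`c = β(x)x⁻¹ ∈ Pᵢ₋₁`; if `β` is trivial on `Pᵢ₋₁` modulo `P₀` then `βᵏ(x) ≡ cᵏx`, so `c^q ≡ 1` in
the `p`-group `P / P₀`, whence `c ≡ 1`. Thus `⟨β⟩` preserves every coset `Φ(P)g`, and counting
modulo `q` each such coset contains a `β`-fixed point. The fixed-point subgroup therefore
supplements `Φ(P)`, so it is all of `P` and `β = 1`.
-/

open MulAction

namespace MulAut

variable {G : Type*} [Group G]

theorem pow_apply_mul_inv_mem {K N : Subgroup G} (hNK : N ≤ K) {γ : MulAut G}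
    (hγ : ∀ x ∈ K, γ x * x⁻¹ ∈ N) (k : ℕ) : ∀ x ∈ K, (γ ^ k) x * x⁻¹ ∈ N := by
  induction k with
  | zero => simp
  | succ k ih =>
    intro x hx
    have hy : (γ ^ k) x ∈ K := by
      simpa using K.mul_mem (hNK (ih x hx)) hx
    simpa [pow_succ', mul_assoc] using N.mul_mem (hγ _ hy) (ih x hx)

theorem apply_mul_inv_mem_of_pow_eq_one {p q : ℕ} (hpq : p.Coprime q) {N L : Subgroup G}
    [N.Normal] (hNL : N ≤ L) (hG : IsPGroup p (G ⧸ N)) {β : MulAut G} (hβ : β ^ q = 1)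
    (hL : ∀ y ∈ L, β y * y⁻¹ ∈ N) {x : G} (hx : β x * x⁻¹ ∈ L) : β x * x⁻¹ ∈ N := by
  set c := β x * x⁻¹
  have hc_fixed (k : ℕ) : ((β ^ k) c : G ⧸ N) = c :=
    QuotientGroup.eq_iff_div_mem.mpr <| by
      simpa [div_eq_mul_inv] using pow_apply_mul_inv_mem hNL hL k c hx
  have horbit (k : ℕ) : ((β ^ k) x : G ⧸ N) = (c : G ⧸ N) ^ k * x := by
    induction k with
    | zero => simp
    | succ k ih =>
      have hstep : (β ^ (k + 1)) x = (β ^ k) c * (β ^ k) x := by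
        simp [c, pow_succ]
      rw [hstep, QuotientGroup.mk_mul, hc_fixed, ih, pow_succ', mul_assoc]
  have hcq : (c : G ⧸ N) ^ q = 1 := by
    simpa [hβ] using (horbit q).symm
  have hc1 : orderOf (c : G ⧸ N) = 1 :=
    (hG.orderOf_coprime hpq _).eq_one_of_dvd (orderOf_dvd_of_pow_eq_one hcq)
  exact (QuotientGroup.eq_one_iff c).mp (orderOf_eq_one_iff.mp hc1)

theorem apply_mul_inv_mem_of_stabilizes_chain {p q : ℕ} (hpq : p.Coprime q) {m : ℕ}
    {C : ℕ → Subgroup G} [(C 0).Normal] (hG : IsPGroup p (G ⧸ C 0))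
    (hchain : ∀ i < m, C i ≤ C (i + 1)) {β : MulAut G} (hβq : β ^ q = 1)
    (hβ : ∀ i < m, ∀ x ∈ C (i + 1), β x * x⁻¹ ∈ C i) :
    ∀ i < m, ∀ x ∈ C (i + 1), β x * x⁻¹ ∈ C 0 := by
  have hmono : ∀ i ≤ m, C 0 ≤ C i := by
    intro i hi
    induction i with
    | zero => exact le_rfl
    | succ i ih => exact (ih (by omega)).trans (hchain i hi)
  intro i hi
  induction i with
  | zero => exact hβ 0 hi
  | succ i ih =>
    exact fun x hx => apply_mul_inv_mem_of_pow_eq_one hpq (hmono _ (by omega)) hG hβq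
      (ih (by omega)) (hβ _ hi x hx)

end MulAut

theorem exists_mem_fixedPoints_mul_inv_mem {Q G : Type*} [Group Q] [Group G] [MulAction Q G]
    {q : ℕ} [Fact q.Prime] (hQ : IsPGroup q Q) {Φ : Subgroup G}
    (hΦ : ¬ q ∣ Nat.card Φ) (hmove : ∀ (γ : Q) (x : G), γ • x * x⁻¹ ∈ Φ) (g : G) :
    ∃ h ∈ fixedPoints Q G, h * g⁻¹ ∈ Φ := by
  let coset : SubMulAction Q G :=
    { carrier := {h | h * g⁻¹ ∈ Φ}
      smul_mem' := fun γ h hh => by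
        simpa [mul_assoc] using Φ.mul_mem (hmove γ h) hh }
  have hcard : Nat.card coset = Nat.card Φ :=
    Nat.card_congr (Equiv.subtypeEquiv (Equiv.mulRight g⁻¹) fun _ => Iff.rfl)
  obtain ⟨⟨h, hh⟩, hfixed⟩ := hQ.nonempty_fixed_point_of_prime_not_dvd_card coset (hcard ▸ hΦ)
  exact ⟨h, fun γ => congrArg Subtype.val (hfixed γ), hh⟩

theorem MulAut.eq_one_of_apply_mul_inv_mem_frattini {G : Type*} [Group G] [Finite G]
    {p q : ℕ} [Fact p.Prime] [Fact q.Prime] (hpq : p.Coprime q) (hΦ : IsPGroup p (frattini G))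
    {β : MulAut G} (hβq : β ^ q = 1) (hβ : ∀ x, β x * x⁻¹ ∈ frattini G) : β = 1 := by
  have hQ : IsPGroup q (Subgroup.zpowers β) := fun ⟨γ, hγ⟩ => by
    obtain ⟨k, rfl⟩ := Subgroup.mem_zpowers_iff.mp hγ
    refine ⟨1, Subtype.ext ?_⟩
    change (β ^ k) ^ q ^ 1 = 1
    rw [pow_one, ← zpow_natCast, ← zpow_mul, mul_comm, zpow_mul, zpow_natCast, hβq, one_zpow]
  have hmove (γ : Subgroup.zpowers β) (x : G) : γ • x * x⁻¹ ∈ frattini G := by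
    obtain ⟨k, hk⟩ := mem_powers_iff_mem_zpowers.mpr γ.2
    rw [Subgroup.smul_def, MulAut.smul_def, ← hk]
    exact MulAut.pow_apply_mul_inv_mem le_top (fun x _ => hβ x) k x trivial
  have hcard : ¬ q ∣ Nat.card (frattini G) := by
    obtain ⟨n, hn⟩ := IsPGroup.iff_card.mp hΦ
    exact fun hdvd => (Fact.out : q.Prime).one_lt.ne'
      ((hpq.pow_left n).symm.eq_one_of_dvd (hn ▸ hdvd))
  let H : Subgroup G := (β : G →* G).eqLocus (MonoidHom.id G)
  have hgen : H ⊔ frattini G = ⊤ := by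
    refine eq_top_iff.mpr fun g _ => ?_
    obtain ⟨h, hfix, hh⟩ := exists_mem_fixedPoints_mul_inv_mem hQ hcard hmove g
    have hH : h ∈ H := hfix ⟨β, Subgroup.mem_zpowers β⟩
    rw [show g = (h * g⁻¹)⁻¹ * h by group]
    exact mul_mem (Subgroup.mem_sup_right (inv_mem hh)) (Subgroup.mem_sup_left hH)
  ext x
  exact (frattini_nongenerating hgen ▸ Subgroup.mem_top x : x ∈ H)

/-- Fix a prime `p`, a finite `p`-group `P`, and a chain of subgroups
`P₀ ≤ P₁ ≤ ⋯ ≤ P_m = P`, each normal in `P`, with `P₀ ≤ Φ(P)` (the Frattini subgroup).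
Let `α` be an automorphism of `P` with `α(x)·x⁻¹ ∈ P_{i−1}` for every `1 ≤ i ≤ m` and
every `x ∈ P_i`.  Then the order of `α` is a power of `p`. -/
theorem stmt_15 (p : ℕ) (hp : p.Prime) (P : Type*) [Group P] [Finite P]
    (hP : IsPGroup p P) (m : ℕ) (C : ℕ → Subgroup P)
    (hchain : ∀ i < m, C i ≤ C (i + 1))
    (hnormal : ∀ i ≤ m, (C i).Normal)
    (htop : C m = ⊤)
    (hfrattini : C 0 ≤ frattini P)
    (α : MulAut P)
    (hα : ∀ i, 1 ≤ i → i ≤ m → ∀ x ∈ C i, α x * x⁻¹ ∈ C (i - 1)) :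
    ∃ k : ℕ, orderOf α = p ^ k := by
  have : Fact p.Prime := ⟨hp⟩
  have : (C 0).Normal := hnormal 0 m.zero_le
  have hα_order_ne_zero := (orderOf_pos α).ne'
  refine ⟨_, Nat.eq_prime_pow_of_unique_prime_dvd hα_order_ne_zero fun {q} hq hdvd => ?_⟩
  by_contra hqp
  have : Fact q.Prime := ⟨hq⟩
  have hpq : p.Coprime q := (Nat.coprime_primes hp hq).mpr (Ne.symm hqp)
  set β := α ^ (orderOf α / q)
  have hβ_order : orderOf β = q := orderOf_pow_orderOf_div hα_order_ne_zero hdvd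
  have hβ_chain (i : ℕ) (hi : i < m) : ∀ x ∈ C (i + 1), β x * x⁻¹ ∈ C i :=
    MulAut.pow_apply_mul_inv_mem (hchain i hi)
      (fun x hx => by simpa using hα (i + 1) (by omega) hi x hx) _
  have hβ_frattini (x : P) : β x * x⁻¹ ∈ frattini P := by
    refine hfrattini ?_
    cases m with
    | zero => simp [htop]
    | succ n =>
      exact MulAut.apply_mul_inv_mem_of_stabilizes_chain hpq (hP.to_quotient _) hchain
        (hβ_order ▸ pow_orderOf_eq_one β) hβ_chain n n.lt_succ_self x (htop ▸ Subgroup.mem_top x)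
  have hβ_one : β = 1 := MulAut.eq_one_of_apply_mul_inv_mem_frattini hpq (hP.to_subgroup _)
    (hβ_order ▸ pow_orderOf_eq_one β) hβ_frattini
  exact hq.one_lt.ne' (by rw [← hβ_order, hβ_one, orderOf_one])
end

section
/- With Δ, 𝒯, C_i, and Gr(ξ) as defined, the subspace 𝒢̄ = span_{F₃}({C_i : i ∈ I} ∪ {Gr(ξ) : ξ ∈ 𝒯}) of F₃^Δ has dimension 7, and the ternary Golay code 𝒢 = span_{F₃}{C_i + Gr(ξ) : i ∈ I, ξ ∈ 𝒯} has dimension 6. Explicitly, for any basis {ξ₁, ξ₂} of the tetracode 𝒯, the set {C₁, C₂, C₃, C₄, Gr(0), Gr(ξ₁), Gr(ξ₂)} is a basis of 𝒢̄ and the set {C₁ − C₂, C₁ − C₃, C₁ − C₄, Gr(ξ₁) − Gr(0), Gr(ξ₂) − Gr(0), C₁ + Gr(0)} is a basis of 𝒢. -/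
noncomputable section

/-- `C_i = Σ_{c ∈ F₃} e_{(c,i)} ∈ F₃^Δ`, where `Δ = F₃ × I` with `I = Fin 4`. -/
def Cvec (i : Fin 4) : (ZMod 3 × Fin 4) → ZMod 3 :=
  ∑ c : ZMod 3, Pi.single ((c, i) : ZMod 3 × Fin 4) (1 : ZMod 3)

/-- `Gr(ξ) = Σ_{i ∈ I} e_{(ξ(i), i)} ∈ F₃^Δ`, the "graph" of `ξ : I → F₃`. -/
def Grv (ξ : Fin 4 → ZMod 3) : (ZMod 3 × Fin 4) → ZMod 3 :=
  ∑ i : Fin 4, Pi.single ((ξ i, i) : ZMod 3 × Fin 4) (1 : ZMod 3)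

/-- The tetracode `𝒯 = {ξ ∈ F₃^I : ξ(3) = ξ(1) + ξ(2), ξ(4) = ξ(1) + ξ(3)}`
(with indices `1,2,3,4` written as `0,1,2,3 : Fin 4`). -/
def Tetracode : Submodule (ZMod 3) (Fin 4 → ZMod 3) where
  carrier := {ξ | ξ 2 = ξ 0 + ξ 1 ∧ ξ 3 = ξ 0 + ξ 2}
  add_mem' := by
    rintro a b ⟨ha1, ha2⟩ ⟨hb1, hb2⟩
    constructor <;> simp only [Pi.add_apply, ha1, ha2, hb1, hb2] <;> ring
  zero_mem' := by simp
  smul_mem' := by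
    rintro c a ⟨h1, h2⟩
    constructor <;> simp only [Pi.smul_apply, h1, h2, smul_eq_mul] <;> ring

/-- `𝒢̄ = span({C_i} ∪ Gr(𝒯)) ≤ F₃^Δ`. -/
def GolayBar : Submodule (ZMod 3) ((ZMod 3 × Fin 4) → ZMod 3) :=
  Submodule.span (ZMod 3) (Set.range Cvec ∪ Grv '' (Tetracode : Set (Fin 4 → ZMod 3)))

/-- The ternary Golay code `𝒢 = span{C_i + Gr(ξ) : i ∈ I, ξ ∈ 𝒯} ≤ F₃^Δ`. -/
def Golay : Submodule (ZMod 3) ((ZMod 3 × Fin 4) → ZMod 3) :=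
  Submodule.span (ZMod 3) {x | ∃ i : Fin 4, ∃ ξ ∈ Tetracode, x = Cvec i + Grv ξ}

/- ### Auxiliary lemmas -/

section Aux

lemma Cvec_apply (j : Fin 4) (c : ZMod 3) (i : Fin 4) :
    Cvec j (c, i) = if i = j then 1 else 0 := by
  simp only [Cvec, Finset.sum_apply, Pi.single_apply, Prod.mk.injEq]
  have : ∀ x : ZMod 3, (if c = x ∧ i = j then (1:ZMod 3) else 0)
      = if c = x then (if i = j then 1 else 0) else 0 := by
    intro x; by_cases h : c = x <;> by_cases h2 : i = j <;> simp_all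
  rw [Finset.sum_congr rfl (fun x _ => this x), Finset.sum_ite_eq Finset.univ c
    (fun _ => if i = j then (1:ZMod 3) else 0)]
  simp

lemma Grv_apply (ξ : Fin 4 → ZMod 3) (c : ZMod 3) (i : Fin 4) :
    Grv ξ (c, i) = if c = ξ i then 1 else 0 := by
  simp only [Grv, Finset.sum_apply, Pi.single_apply, Prod.mk.injEq]
  have : ∀ x : Fin 4, (if c = ξ x ∧ i = x then (1:ZMod 3) else 0)
      = if i = x then (if c = ξ i then 1 else 0) else 0 := by
    intro x; by_cases h : i = x <;> by_cases h2 : c = ξ x <;> subst_eqs <;> simp_all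
  rw [Finset.sum_congr rfl (fun x _ => this x), Finset.sum_ite_eq Finset.univ i
    (fun _ => if c = ξ i then (1:ZMod 3) else 0)]
  simp

variable {α : Type*}

lemma cv7_1 (x0 x1 x2 x3 x4 x5 x6 : α) : ![x0,x1,x2,x3,x4,x5,x6] 1 = x1 := rfl
lemma cv7_2 (x0 x1 x2 x3 x4 x5 x6 : α) : ![x0,x1,x2,x3,x4,x5,x6] 2 = x2 := rfl
lemma cv7_3 (x0 x1 x2 x3 x4 x5 x6 : α) : ![x0,x1,x2,x3,x4,x5,x6] 3 = x3 := rfl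
lemma cv7_4 (x0 x1 x2 x3 x4 x5 x6 : α) : ![x0,x1,x2,x3,x4,x5,x6] 4 = x4 := rfl
lemma cv7_5 (x0 x1 x2 x3 x4 x5 x6 : α) : ![x0,x1,x2,x3,x4,x5,x6] 5 = x5 := rfl
lemma cv7_6 (x0 x1 x2 x3 x4 x5 x6 : α) : ![x0,x1,x2,x3,x4,x5,x6] 6 = x6 := rfl

lemma cv6_1 (x0 x1 x2 x3 x4 x5 : α) : ![x0,x1,x2,x3,x4,x5] 1 = x1 := rfl
lemma cv6_2 (x0 x1 x2 x3 x4 x5 : α) : ![x0,x1,x2,x3,x4,x5] 2 = x2 := rfl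
lemma cv6_3 (x0 x1 x2 x3 x4 x5 : α) : ![x0,x1,x2,x3,x4,x5] 3 = x3 := rfl
lemma cv6_4 (x0 x1 x2 x3 x4 x5 : α) : ![x0,x1,x2,x3,x4,x5] 4 = x4 := rfl
lemma cv6_5 (x0 x1 x2 x3 x4 x5 : α) : ![x0,x1,x2,x3,x4,x5] 5 = x5 := rfl

/-- the key pointwise identity in `F₃`. -/
lemma key_pointwise (a b c : ZMod 3) : (if c = a + b then (1:ZMod 3) else 0)
    = (if c = a then 1 else 0) + (if c = b then 1 else 0) - (if c = 0 then 1 else 0)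
      + a * b := by revert a b c; decide

lemma Grv_add (ξ η : Fin 4 → ZMod 3) :
    Grv (ξ + η) = Grv ξ + Grv η - Grv 0 + ∑ i : Fin 4, (ξ i * η i) • Cvec i := by
  funext ⟨c, i⟩
  have hs : (∑ j : Fin 4, (ξ j * η j) • Cvec j) (c, i) = ξ i * η i := by
    simp only [Finset.sum_apply, Pi.smul_apply, Cvec_apply, smul_eq_mul, mul_ite, mul_one,
      mul_zero]
    rw [Finset.sum_ite_eq Finset.univ i (fun j => ξ j * η j)]
    simp
  simp only [Pi.add_apply, Pi.sub_apply, Grv_apply, Pi.add_apply, hs, Pi.zero_apply]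
  exact key_pointwise (ξ i) (η i) c

lemma Grv_smul (a : ZMod 3) (ξ : Fin 4 → ZMod 3) :
    Grv (a • ξ) = a • Grv ξ + (1 - a) • Grv 0
      + ∑ i : Fin 4, (2 * (a * a - a) * (ξ i * ξ i)) • Cvec i := by
  have h : a = 0 ∨ a = 1 ∨ a = 2 := by revert a; decide
  rcases h with rfl | rfl | rfl
  · have : ∀ x : ZMod 3, 2 * ((0:ZMod 3) * 0 - 0) * (x * x) = 0 := by decide
    simp only [this, zero_smul, Finset.sum_const, smul_zero, zero_add, sub_zero, one_smul]
    simp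
  · have : ∀ x : ZMod 3, 2 * ((1:ZMod 3) * 1 - 1) * (x * x) = 0 := by decide
    simp only [this, zero_smul, Finset.sum_const, smul_zero, one_smul, sub_self]
    simp
  · have h2 : (2 : ZMod 3) • ξ = ξ + ξ := two_smul _ ξ
    rw [h2, Grv_add]
    have : ∀ x : ZMod 3, 2 * ((2:ZMod 3) * 2 - 2) * (x * x) = x * x := by decide
    simp only [this]
    have h12 : (1 : ZMod 3) - 2 = -1 := by decide
    rw [h12]
    module

lemma Grv_combo (ξ₁ ξ₂ : Fin 4 → ZMod 3) (a b : ZMod 3) :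
    Grv (a • ξ₁ + b • ξ₂) - Grv 0
      = a • (Grv ξ₁ - Grv 0) + b • (Grv ξ₂ - Grv 0)
        + ∑ i : Fin 4, (2 * (a * a - a) * (ξ₁ i * ξ₁ i) + 2 * (b * b - b) * (ξ₂ i * ξ₂ i)
            + (a * ξ₁ i) * (b * ξ₂ i)) • Cvec i := by
  rw [Grv_add, Grv_smul, Grv_smul]
  simp only [Pi.smul_apply, smul_eq_mul, add_smul, Finset.sum_add_distrib]
  module

/-- the tetracode is self-orthogonal. -/
lemma tetra_selfdual {ξ η : Fin 4 → ZMod 3} (hξ : ξ ∈ Tetracode) (hη : η ∈ Tetracode) :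
    ∑ i : Fin 4, ξ i * η i = 0 := by
  obtain ⟨h1, h2⟩ := hξ
  obtain ⟨h3, h4⟩ := hη
  rw [Fin.sum_univ_four, h1, h2, h3, h4, h1, h3]
  have h3' : (3 : ZMod 3) = 0 := by decide
  linear_combination (2 * ξ 0 * η 0 + ξ 1 * η 1 + ξ 0 * η 1 + ξ 1 * η 0) * h3'

end Aux

section Span

variable (ξ₁ ξ₂ : Fin 4 → ZMod 3)

/-- span of the seven vectors is `𝒢̄`. -/
lemma span7 (h₁ : ξ₁ ∈ Tetracode) (h₂ : ξ₂ ∈ Tetracode)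
    (hspan : Submodule.span (ZMod 3) {ξ₁, ξ₂} = Tetracode) :
    Submodule.span (ZMod 3)
      (Set.range ![Cvec 0, Cvec 1, Cvec 2, Cvec 3, Grv 0, Grv ξ₁, Grv ξ₂]) = GolayBar := by
  set S : Set ((ZMod 3 × Fin 4) → ZMod 3) :=
    Set.range ![Cvec 0, Cvec 1, Cvec 2, Cvec 3, Grv 0, Grv ξ₁, Grv ξ₂] with hS
  have hCmem : ∀ i : Fin 4, Cvec i ∈ Submodule.span (ZMod 3) S := by
    intro i
    fin_cases i
    · exact Submodule.subset_span ⟨0, rfl⟩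
    · exact Submodule.subset_span ⟨1, rfl⟩
    · exact Submodule.subset_span ⟨2, rfl⟩
    · exact Submodule.subset_span ⟨3, rfl⟩
  apply le_antisymm
  · rw [Submodule.span_le]
    rintro x ⟨k, rfl⟩
    fin_cases k
    · exact Submodule.subset_span (Or.inl ⟨0, rfl⟩)
    · exact Submodule.subset_span (Or.inl ⟨1, rfl⟩)
    · exact Submodule.subset_span (Or.inl ⟨2, rfl⟩)
    · exact Submodule.subset_span (Or.inl ⟨3, rfl⟩)
    · exact Submodule.subset_span (Or.inr ⟨0, Submodule.zero_mem _, rfl⟩)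
    · exact Submodule.subset_span (Or.inr ⟨ξ₁, h₁, rfl⟩)
    · exact Submodule.subset_span (Or.inr ⟨ξ₂, h₂, rfl⟩)
  · rw [GolayBar, Submodule.span_le]
    rintro x (⟨i, rfl⟩ | ⟨ξ, hξ, rfl⟩)
    · exact hCmem i
    · have hξ' : ξ ∈ Submodule.span (ZMod 3) ({ξ₁, ξ₂} : Set (Fin 4 → ZMod 3)) := by
        rw [hspan]; exact hξ
      obtain ⟨a, b, hab⟩ := Submodule.mem_span_pair.mp hξ'
      have h0 : Grv 0 ∈ Submodule.span (ZMod 3) S := Submodule.subset_span ⟨4, rfl⟩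
      have hg1 : Grv ξ₁ ∈ Submodule.span (ZMod 3) S := Submodule.subset_span ⟨5, rfl⟩
      have hg2 : Grv ξ₂ ∈ Submodule.span (ZMod 3) S := Submodule.subset_span ⟨6, rfl⟩
      have key : Grv ξ = Grv 0 + (a • (Grv ξ₁ - Grv 0) + b • (Grv ξ₂ - Grv 0)
          + ∑ i : Fin 4, (2 * (a * a - a) * (ξ₁ i * ξ₁ i) + 2 * (b * b - b) * (ξ₂ i * ξ₂ i)
            + (a * ξ₁ i) * (b * ξ₂ i)) • Cvec i) := by
        rw [← Grv_combo, ← hab]; abel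
      rw [key]
      refine Submodule.add_mem _ h0 (Submodule.add_mem _ (Submodule.add_mem _
        (Submodule.smul_mem _ _ (Submodule.sub_mem _ hg1 h0))
        (Submodule.smul_mem _ _ (Submodule.sub_mem _ hg2 h0)))
        (Submodule.sum_mem _ fun i _ => Submodule.smul_mem _ _ (hCmem i)))

/-- span of the six vectors is `𝒢`. -/
lemma span6 (h₁ : ξ₁ ∈ Tetracode) (h₂ : ξ₂ ∈ Tetracode)
    (hspan : Submodule.span (ZMod 3) {ξ₁, ξ₂} = Tetracode) :
    Submodule.span (ZMod 3)
      (Set.range ![Cvec 0 - Cvec 1, Cvec 0 - Cvec 2, Cvec 0 - Cvec 3,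
        Grv ξ₁ - Grv 0, Grv ξ₂ - Grv 0, Cvec 0 + Grv 0]) = Golay := by
  set S : Set ((ZMod 3 × Fin 4) → ZMod 3) :=
    Set.range ![Cvec 0 - Cvec 1, Cvec 0 - Cvec 2, Cvec 0 - Cvec 3,
      Grv ξ₁ - Grv 0, Grv ξ₂ - Grv 0, Cvec 0 + Grv 0] with hS
  have hCd : ∀ i : Fin 4, Cvec i - Cvec 0 ∈ Submodule.span (ZMod 3) S := by
    intro i
    fin_cases i
    · show Cvec 0 - Cvec 0 ∈ _
      rw [sub_self]; exact Submodule.zero_mem _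
    · show Cvec 1 - Cvec 0 ∈ _
      rw [show Cvec 1 - Cvec 0 = -(Cvec 0 - Cvec 1) by abel]
      exact Submodule.neg_mem _ (Submodule.subset_span ⟨0, rfl⟩)
    · show Cvec 2 - Cvec 0 ∈ _
      rw [show Cvec 2 - Cvec 0 = -(Cvec 0 - Cvec 2) by abel]
      exact Submodule.neg_mem _ (Submodule.subset_span ⟨1, rfl⟩)
    · show Cvec 3 - Cvec 0 ∈ _
      rw [show Cvec 3 - Cvec 0 = -(Cvec 0 - Cvec 3) by abel]
      exact Submodule.neg_mem _ (Submodule.subset_span ⟨2, rfl⟩)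
  have hsumC : ∀ d : Fin 4 → ZMod 3, (∑ i : Fin 4, d i) = 0 →
      (∑ i : Fin 4, d i • Cvec i) ∈ Submodule.span (ZMod 3) S := by
    intro d hd
    have h2 : ∑ i : Fin 4, d i • (Cvec i - Cvec 0) = ∑ i : Fin 4, d i • Cvec i := by
      simp only [smul_sub, Finset.sum_sub_distrib, ← Finset.sum_smul, hd, zero_smul, sub_zero]
    rw [← h2]
    exact Submodule.sum_mem _ fun i _ => Submodule.smul_mem _ _ (hCd i)
  apply le_antisymm
  · rw [Submodule.span_le]
    rintro x ⟨k, rfl⟩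
    have hgen : ∀ (i : Fin 4) (ξ : Fin 4 → ZMod 3), ξ ∈ Tetracode →
        Cvec i + Grv ξ ∈ Golay := fun i ξ hξ => Submodule.subset_span ⟨i, ξ, hξ, rfl⟩
    fin_cases k
    · show Cvec 0 - Cvec 1 ∈ Golay
      rw [show Cvec 0 - Cvec 1 = (Cvec 0 + Grv 0) - (Cvec 1 + Grv 0) by abel]
      exact Submodule.sub_mem _ (hgen 0 0 (Submodule.zero_mem _))
        (hgen 1 0 (Submodule.zero_mem _))
    · show Cvec 0 - Cvec 2 ∈ Golay
      rw [show Cvec 0 - Cvec 2 = (Cvec 0 + Grv 0) - (Cvec 2 + Grv 0) by abel]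
      exact Submodule.sub_mem _ (hgen 0 0 (Submodule.zero_mem _))
        (hgen 2 0 (Submodule.zero_mem _))
    · show Cvec 0 - Cvec 3 ∈ Golay
      rw [show Cvec 0 - Cvec 3 = (Cvec 0 + Grv 0) - (Cvec 3 + Grv 0) by abel]
      exact Submodule.sub_mem _ (hgen 0 0 (Submodule.zero_mem _))
        (hgen 3 0 (Submodule.zero_mem _))
    · show Grv ξ₁ - Grv 0 ∈ Golay
      rw [show Grv ξ₁ - Grv 0 = (Cvec 0 + Grv ξ₁) - (Cvec 0 + Grv 0) by abel]
      exact Submodule.sub_mem _ (hgen 0 ξ₁ h₁) (hgen 0 0 (Submodule.zero_mem _))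
    · show Grv ξ₂ - Grv 0 ∈ Golay
      rw [show Grv ξ₂ - Grv 0 = (Cvec 0 + Grv ξ₂) - (Cvec 0 + Grv 0) by abel]
      exact Submodule.sub_mem _ (hgen 0 ξ₂ h₂) (hgen 0 0 (Submodule.zero_mem _))
    · show Cvec 0 + Grv 0 ∈ Golay
      exact hgen 0 0 (Submodule.zero_mem _)
  · rw [Golay, Submodule.span_le]
    rintro x ⟨i, ξ, hξ, rfl⟩
    have hξ' : ξ ∈ Submodule.span (ZMod 3) ({ξ₁, ξ₂} : Set (Fin 4 → ZMod 3)) := by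
      rw [hspan]; exact hξ
    obtain ⟨a, b, hab⟩ := Submodule.mem_span_pair.mp hξ'
    have h00 : Cvec 0 + Grv 0 ∈ Submodule.span (ZMod 3) S := Submodule.subset_span ⟨5, rfl⟩
    have hg1 : Grv ξ₁ - Grv 0 ∈ Submodule.span (ZMod 3) S := Submodule.subset_span ⟨3, rfl⟩
    have hg2 : Grv ξ₂ - Grv 0 ∈ Submodule.span (ZMod 3) S := Submodule.subset_span ⟨4, rfl⟩
    have hdsum : (∑ i : Fin 4, (2 * (a * a - a) * (ξ₁ i * ξ₁ i)
        + 2 * (b * b - b) * (ξ₂ i * ξ₂ i) + (a * ξ₁ i) * (b * ξ₂ i))) = 0 := by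
      have e1 := tetra_selfdual h₁ h₁
      have e2 := tetra_selfdual h₂ h₂
      have e3 := tetra_selfdual h₁ h₂
      have hr : ∀ i : Fin 4, 2 * (a * a - a) * (ξ₁ i * ξ₁ i) + 2 * (b * b - b) * (ξ₂ i * ξ₂ i)
          + (a * ξ₁ i) * (b * ξ₂ i)
          = 2 * (a * a - a) * (ξ₁ i * ξ₁ i) + 2 * (b * b - b) * (ξ₂ i * ξ₂ i)
            + a * b * (ξ₁ i * ξ₂ i) := fun i => by ring
      rw [Finset.sum_congr rfl (fun i _ => hr i)]
      simp only [Finset.sum_add_distrib, ← Finset.mul_sum]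
      rw [e1, e2, e3]
      ring
    have key : Cvec i + Grv ξ = (Cvec i - Cvec 0) + (a • (Grv ξ₁ - Grv 0)
        + b • (Grv ξ₂ - Grv 0)
        + ∑ i : Fin 4, (2 * (a * a - a) * (ξ₁ i * ξ₁ i) + 2 * (b * b - b) * (ξ₂ i * ξ₂ i)
          + (a * ξ₁ i) * (b * ξ₂ i)) • Cvec i) + (Cvec 0 + Grv 0) := by
      rw [← Grv_combo, ← hab]; abel
    rw [key]
    exact Submodule.add_mem _ (Submodule.add_mem _ (hCd i) (Submodule.add_mem _
      (Submodule.add_mem _ (Submodule.smul_mem _ _ hg1) (Submodule.smul_mem _ _ hg2))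
      (hsumC _ hdsum))) h00

end Span

section Std

/-- standard basis of the tetracode. -/
def eta1 : Fin 4 → ZMod 3 := ![1, 0, 1, 2]
def eta2 : Fin 4 → ZMod 3 := ![0, 1, 1, 1]

lemma eta1_mem : eta1 ∈ Tetracode := ⟨by decide, by decide⟩
lemma eta2_mem : eta2 ∈ Tetracode := ⟨by decide, by decide⟩

lemma span_std : Submodule.span (ZMod 3) {eta1, eta2} = Tetracode := by
  apply le_antisymm
  · rw [Submodule.span_le]
    rintro x (rfl | rfl)
    · exact eta1_mem
    · exact eta2_mem
  · intro ξ hξ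
    obtain ⟨hA, hB⟩ := hξ
    refine Submodule.mem_span_pair.mpr ⟨ξ 0, ξ 1, ?_⟩
    funext i
    fin_cases i
    · show ξ 0 * 1 + ξ 1 * 0 = ξ 0; ring
    · show ξ 0 * 0 + ξ 1 * 1 = ξ 1; ring
    · show ξ 0 * 1 + ξ 1 * 1 = ξ 2; rw [hA]; ring
    · show ξ 0 * 2 + ξ 1 * 1 = ξ 3; rw [hB, hA]; ring

end Std

section Indep

lemma sum_apply7 (ξ₁ ξ₂ : Fin 4 → ZMod 3) (g : Fin 7 → ZMod 3) (c : ZMod 3) (i : Fin 4) :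
    (∑ k, g k • ![Cvec 0, Cvec 1, Cvec 2, Cvec 3, Grv 0, Grv ξ₁, Grv ξ₂] k) (c, i)
    = (if i = 0 then g 0 else 0) + (if i = 1 then g 1 else 0)
      + (if i = 2 then g 2 else 0) + (if i = 3 then g 3 else 0)
      + (if c = 0 then g 4 else 0) + (if c = ξ₁ i then g 5 else 0)
      + (if c = ξ₂ i then g 6 else 0) := by
  simp only [Fin.sum_univ_seven, Matrix.cons_val_zero, cv7_1, cv7_2, cv7_3, cv7_4, cv7_5,
    cv7_6, Finset.sum_apply, Pi.add_apply, Pi.smul_apply, smul_eq_mul, Cvec_apply, Grv_apply,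
    Pi.zero_apply, mul_ite, mul_one, mul_zero]

lemma indep7_std : LinearIndependent (ZMod 3)
    ![Cvec 0, Cvec 1, Cvec 2, Cvec 3, Grv 0, Grv eta1, Grv eta2] := by
  rw [Fintype.linearIndependent_iff]
  intro g hg
  have e : ∀ (c : ZMod 3) (i : Fin 4),
      (if i = 0 then g 0 else 0) + (if i = 1 then g 1 else 0)
      + (if i = 2 then g 2 else 0) + (if i = 3 then g 3 else 0)
      + (if c = 0 then g 4 else 0) + (if c = eta1 i then g 5 else 0)
      + (if c = eta2 i then g 6 else 0) = 0 := by
    intro c i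
    rw [← sum_apply7, hg]; rfl
  have e20 := e 2 0; have e10 := e 1 0; have e00 := e 0 0
  have e21 := e 2 1; have e11 := e 1 1
  have e22 := e 2 2; have e23 := e 2 3
  simp (config := { decide := true }) only [eta1, eta2, if_true, if_false,
    Matrix.cons_val_zero, Matrix.cons_val_one, Matrix.head_cons, Matrix.cons_val_two,
    Matrix.cons_val_three, Matrix.vecTail, Matrix.vecHead, ite_true, ite_false,
    Function.comp] at e20 e10 e00 e21 e11 e22 e23
  intro k
  fin_cases k
  · show g 0 = 0; linear_combination e20
  · show g 1 = 0; linear_combination e21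
  · show g 2 = 0; linear_combination e22
  · show g 3 = 0; linear_combination e23 - e10 + e20
  · show g 4 = 0; linear_combination e00 - e20 - e11 + e21
  · show g 5 = 0; linear_combination e10 - e20
  · show g 6 = 0; linear_combination e11 - e21

lemma sum_apply6 (ξ₁ ξ₂ : Fin 4 → ZMod 3) (g : Fin 6 → ZMod 3) (c : ZMod 3) (i : Fin 4) :
    (∑ k, g k • ![Cvec 0 - Cvec 1, Cvec 0 - Cvec 2, Cvec 0 - Cvec 3,
        Grv ξ₁ - Grv 0, Grv ξ₂ - Grv 0, Cvec 0 + Grv 0] k) (c, i)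
    = (g 0 + g 1 + g 2 + g 5) * (if i = 0 then 1 else 0) - g 0 * (if i = 1 then 1 else 0)
      - g 1 * (if i = 2 then 1 else 0) - g 2 * (if i = 3 then 1 else 0)
      + g 3 * (if c = ξ₁ i then 1 else 0) + g 4 * (if c = ξ₂ i then 1 else 0)
      + (g 5 - g 3 - g 4) * (if c = 0 then 1 else 0) := by
  simp only [Fin.sum_univ_six, Matrix.cons_val_zero, cv6_1, cv6_2, cv6_3, cv6_4, cv6_5,
    Finset.sum_apply, Pi.add_apply, Pi.sub_apply, Pi.smul_apply, smul_eq_mul, Cvec_apply,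
    Grv_apply, Pi.zero_apply]
  ring

lemma indep6_std : LinearIndependent (ZMod 3)
    ![Cvec 0 - Cvec 1, Cvec 0 - Cvec 2, Cvec 0 - Cvec 3,
      Grv eta1 - Grv 0, Grv eta2 - Grv 0, Cvec 0 + Grv 0] := by
  rw [Fintype.linearIndependent_iff]
  intro g hg
  have e : ∀ (c : ZMod 3) (i : Fin 4),
      (g 0 + g 1 + g 2 + g 5) * (if i = 0 then 1 else 0) - g 0 * (if i = 1 then 1 else 0)
      - g 1 * (if i = 2 then 1 else 0) - g 2 * (if i = 3 then 1 else 0)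
      + g 3 * (if c = eta1 i then 1 else 0) + g 4 * (if c = eta2 i then 1 else 0)
      + (g 5 - g 3 - g 4) * (if c = 0 then 1 else 0) = 0 := by
    intro c i
    rw [← sum_apply6, hg]; rfl
  have e21 := e 2 1; have e11 := e 1 1; have e01 := e 0 1
  have e22 := e 2 2; have e12 := e 1 2
  have e23 := e 2 3
  simp (config := { decide := true }) only [eta1, eta2, if_true, if_false,
    Matrix.cons_val_zero, Matrix.cons_val_one, Matrix.head_cons, Matrix.cons_val_two,
    Matrix.cons_val_three, Matrix.vecTail, Matrix.vecHead, ite_true, ite_false,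
    Function.comp] at e21 e11 e01 e22 e12 e23
  intro k
  fin_cases k
  · show g 0 = 0; linear_combination -e21
  · show g 1 = 0; linear_combination -e22
  · show g 2 = 0; linear_combination -e23 + e12 - e22 - e11 + e21
  · show g 3 = 0; linear_combination e12 - e22 - e11 + e21
  · show g 4 = 0; linear_combination e11 - e21
  · show g 5 = 0; linear_combination e01 + e11 - 2 * e21
end Indep

lemma finrank_GolayBar : Module.finrank (ZMod 3) ↥GolayBar = 7 := by
  rw [← span7 eta1 eta2 eta1_mem eta2_mem span_std, finrank_span_eq_card indep7_std]
  simp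

lemma finrank_Golay : Module.finrank (ZMod 3) ↥Golay = 6 := by
  rw [← span6 eta1 eta2 eta1_mem eta2_mem span_std, finrank_span_eq_card indep6_std]
  simp

/-- **Statement 17.** `dim 𝒢̄ = 7` and `dim 𝒢 = 6`; explicitly, for any basis `{ξ₁, ξ₂}`
of the tetracode `𝒯`, the set `{C₁, C₂, C₃, C₄, Gr(0), Gr(ξ₁), Gr(ξ₂)}` is a basis of `𝒢̄`
and `{C₁−C₂, C₁−C₃, C₁−C₄, Gr(ξ₁)−Gr(0), Gr(ξ₂)−Gr(0), C₁+Gr(0)}` is a basis of `𝒢`. -/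
theorem stmt_17 (ξ₁ ξ₂ : Fin 4 → ZMod 3) (h₁ : ξ₁ ∈ Tetracode) (h₂ : ξ₂ ∈ Tetracode)
    (hindep : LinearIndependent (ZMod 3) ![ξ₁, ξ₂])
    (hspan : Submodule.span (ZMod 3) {ξ₁, ξ₂} = Tetracode) :
    Module.finrank (ZMod 3) ↥GolayBar = 7 ∧
    Module.finrank (ZMod 3) ↥Golay = 6 ∧
    (LinearIndependent (ZMod 3)
        ![Cvec 0, Cvec 1, Cvec 2, Cvec 3, Grv 0, Grv ξ₁, Grv ξ₂] ∧
      Submodule.span (ZMod 3)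
        (Set.range ![Cvec 0, Cvec 1, Cvec 2, Cvec 3, Grv 0, Grv ξ₁, Grv ξ₂]) = GolayBar) ∧
    (LinearIndependent (ZMod 3)
        ![Cvec 0 - Cvec 1, Cvec 0 - Cvec 2, Cvec 0 - Cvec 3,
          Grv ξ₁ - Grv 0, Grv ξ₂ - Grv 0, Cvec 0 + Grv 0] ∧
      Submodule.span (ZMod 3)
        (Set.range ![Cvec 0 - Cvec 1, Cvec 0 - Cvec 2, Cvec 0 - Cvec 3,
          Grv ξ₁ - Grv 0, Grv ξ₂ - Grv 0, Cvec 0 + Grv 0]) = Golay) := by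
  refine ⟨finrank_GolayBar, finrank_Golay, ⟨?_, span7 ξ₁ ξ₂ h₁ h₂ hspan⟩,
    ⟨?_, span6 ξ₁ ξ₂ h₁ h₂ hspan⟩⟩
  · rw [linearIndependent_iff_card_eq_finrank_span, Set.finrank,
      span7 ξ₁ ξ₂ h₁ h₂ hspan, finrank_GolayBar, Fintype.card_fin]
  · rw [linearIndependent_iff_card_eq_finrank_span, Set.finrank,
      span6 ξ₁ ξ₂ h₁ h₂ hspan, finrank_Golay, Fintype.card_fin]

end
end
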